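/- arXiv:1501.00624 — 8 statements merged into one kernel-verified Lean document; each statement's English description precedes it below -/
import Mathlib

section
/- For every ε with 0 < ε < 1/4 and every noiseless alternating binary protocol π of length n, there exists a deterministic interactive protocol Π with noiseless feedback over a 3-symbol alphabet, with a fixed order of speaking, of length N ≤ c·n/ε for an absolute constant c > 0, such that for every input pair (x,y) and every noise pattern with at most (1/4 − ε)·N corrupted rounds, both parties output the transcript π(x,y). -/
/-- A noiseless alternating binary protocol: Alice sends a bit in each odd round
(i.e., when the number of previously communicated bits is even) and Bob in each even
round, the bit being a fixed function of the sender's input and the past bits. -/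
structure AltProtocol (X Y : Type) where
  nextA : X → List Bool → Bool
  nextB : Y → List Bool → Bool

/-- The transcript of the first `n` rounds of the noiseless protocol on inputs `x, y`. -/
def AltProtocol.transcript {X Y : Type} (pr : AltProtocol X Y) (x : X) (y : Y) :
    ℕ → List Bool
  | 0 => []
  | n+1 =>
    let T := pr.transcript x y n
    T ++ [if T.length % 2 = 0 then pr.nextA x T else pr.nextB y T]

/-- A deterministic interactive protocol with noiseless feedback, of length `N` over
alphabet `Γ`: a speaker function on strings of received symbols (`true` = Alice),
next-symbol functions for each party (input and received symbols so far), and output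
functions for each party (input and the full sequence of received symbols). -/
structure FeedbackProtocol (Γ X Y O : Type) (N : ℕ) where
  ord : List Γ → Bool
  nextA : X → List Γ → Γ
  nextB : Y → List Γ → Γ
  outA : X → List Γ → O
  outB : Y → List Γ → O

/-- The symbol sent in round `i` of the execution with noise pattern `r`
(the received symbols): the speaker of round `i` is `ord` applied to the received
symbols so far, and it sends according to its next-symbol function. -/
def FeedbackProtocol.sent {Γ X Y O : Type} {N : ℕ} (P : FeedbackProtocol Γ X Y O N)
    (x : X) (y : Y) (r : Fin N → Γ) (i : Fin N) : Γ :=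
  let h := (List.ofFn r).take i.val
  if P.ord h then P.nextA x h else P.nextB y h

/-- The number of corrupted rounds: rounds where the sent symbol differs from the
received one. -/
def FeedbackProtocol.corruptions {Γ X Y O : Type} [DecidableEq Γ] {N : ℕ}
    (P : FeedbackProtocol Γ X Y O N) (x : X) (y : Y) (r : Fin N → Γ) : ℕ :=
  (Finset.univ.filter fun i : Fin N => P.sent x y r i ≠ r i).card

/-- The protocol has a fixed order of speaking if the speaker depends only on the
round number. -/
def FeedbackProtocol.FixedOrder {Γ X Y O : Type} {N : ℕ}
    (P : FeedbackProtocol Γ X Y O N) : Prop :=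
  ∀ h h' : List Γ, h.length = h'.length → P.ord h = P.ord h'

/-!
Both parties compute, from the received symbols alone, a simulated transcript `σ`. A received `0`
or `1` appends that bit when the speaker of the round owns the next position of `σ`, and is
ignored otherwise or when it directly follows a `2`; a received `2` deletes the last two bits of
`σ`. A party sends `2` when one of its own bits in `σ` is wrong, and otherwise its next bit when
that bit would be appended (and `0` when it would not).

Let `g` be the length of the longest correct prefix of `σ`. The potential `2g - |σ| - w`, where the
correction `w ∈ {0, …, 4}` depends only on the parities of `g`, `|σ|` and the round and on whether
the last symbol was a `2`, grows by at least one in every uncorrupted round and drops by at most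
three in any round. After `N` rounds with `k` corruptions it is therefore at least `N - 4k ≥ n`
when `N ≥ n / (4ε)` and `k ≤ (1/4 - ε) N`; as it never exceeds `g`, the first `n` bits of `σ` are
then the transcript.
-/

open Finset

lemma sub_mul_card_filter_le_of_step_bounds {a : ℕ → ℤ} {bad : ℕ → Prop} [DecidablePred bad]
    {d : ℤ} {k : ℕ} (hstep : ∀ i < k, a i - d ≤ a (i + 1))
    (hgood : ∀ i < k, ¬bad i → a i + 1 ≤ a (i + 1)) :
    k - (d + 1) * #{i ∈ range k | bad i} ≤ a k - a 0 := by
  induction k with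
  | zero => simp
  | succ k ih =>
    have ih := ih (fun i hi => hstep i (by omega)) (fun i hi => hgood i (by omega))
    rw [range_add_one, filter_insert]
    by_cases hk : bad k
    · rw [if_pos hk, card_insert_of_notMem (by simp)]
      have := hstep k (by omega)
      push_cast
      linarith
    · rw [if_neg hk]
      have := hgood k (by omega) hk
      push_cast
      linarith

lemma card_filter_univ_fin_eq {N : ℕ} (p : Fin N → Prop) [DecidablePred p] :
    #{i | p i} = #{k ∈ range N | ∃ h : k < N, p ⟨k, h⟩} := by
  rw [← card_map Fin.valEmbedding]
  congr 1
  ext k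
  simp only [mem_map, mem_filter, mem_univ, true_and, Fin.valEmbedding_apply, mem_range]
  constructor
  · rintro ⟨i, hi, rfl⟩
    exact ⟨i.isLt, i.isLt, hi⟩
  · rintro ⟨-, hk, hp⟩
    exact ⟨⟨k, hk⟩, hp, rfl⟩

lemma exists_nat_mem_Icc_div (n : ℕ) {ε : ℝ} (hε : 0 < ε) (hε' : ε ≤ 3 / 4) :
    ∃ N : ℕ, (N : ℝ) ∈ Set.Icc (n / (4 * ε)) (n / ε) := by
  have ht : (1 : ℝ) / 3 ≤ (4 * ε)⁻¹ := by
    rw [le_inv_comm₀ (by norm_num) (by positivity)]; linarith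
  refine ⟨n * ⌈(4 * ε)⁻¹⌉₊, ?_, ?_⟩
  · rw [Nat.cast_mul, div_eq_mul_inv]
    exact mul_le_mul_of_nonneg_left (Nat.le_ceil _) n.cast_nonneg
  · have hceil : (⌈(4 * ε)⁻¹⌉₊ : ℝ) ≤ 4 * (4 * ε)⁻¹ := by
      linarith [Nat.ceil_lt_add_one (inv_nonneg.2 (by positivity : (0 : ℝ) ≤ 4 * ε))]
    calc ((n * ⌈(4 * ε)⁻¹⌉₊ : ℕ) : ℝ) ≤ n * (4 * (4 * ε)⁻¹) := by
          rw [Nat.cast_mul]; exact mul_le_mul_of_nonneg_left hceil n.cast_nonneg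
      _ = n / ε := by field_simp

namespace AltProtocol

variable {X Y : Type} (pr : AltProtocol X Y) (x : X) (y : Y)

def transcriptBit (k : ℕ) : Bool :=
  if k % 2 = 0 then pr.nextA x (pr.transcript x y k) else pr.nextB y (pr.transcript x y k)

@[simp]
lemma length_transcript (k : ℕ) : (pr.transcript x y k).length = k := by
  induction k with
  | zero => rfl
  | succ k ih => simp [transcript, ih]

lemma transcript_succ (k : ℕ) :
    pr.transcript x y (k + 1) = pr.transcript x y k ++ [pr.transcriptBit x y k] := by
  simp only [transcript, transcriptBit, length_transcript]

lemma take_transcript {k m : ℕ} (h : k ≤ m) :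
    (pr.transcript x y m).take k = pr.transcript x y k := by
  induction m, h using Nat.le_induction with
  | base => exact List.take_of_length_le (by simp)
  | succ m hkm ih =>
    rw [transcript_succ, List.take_append_of_le_length (by simpa using hkm), ih]

lemma getElem_transcript {k m : ℕ} (h : k < (pr.transcript x y m).length) :
    (pr.transcript x y m)[k] = pr.transcriptBit x y k := by
  have hk : k < m := by simpa using h
  have hprefix :
      (pr.transcript x y m).take (k + 1) = pr.transcript x y k ++ [pr.transcriptBit x y k] := by
    rw [take_transcript pr x y hk, transcript_succ]
  have hget := congrArg (·[k]?) hprefix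
  simp only [List.getElem?_take, Nat.lt_add_one, ↓reduceIte, List.getElem?_eq_getElem h] at hget
  simpa [List.getElem?_append_right] using hget

def agreeLength (σ : List Bool) : ℕ :=
  Nat.findGreatest (fun k => σ.take k = pr.transcript x y k) σ.length

variable {pr x y} {σ : List Bool}

lemma agreeLength_le : pr.agreeLength x y σ ≤ σ.length := Nat.findGreatest_le _

lemma le_agreeLength_iff {k : ℕ} :
    k ≤ pr.agreeLength x y σ ↔ k ≤ σ.length ∧ σ.take k = pr.transcript x y k := by
  refine ⟨fun hk => ⟨hk.trans agreeLength_le, ?_⟩, fun h => Nat.le_findGreatest h.1 h.2⟩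
  have hspec : σ.take (pr.agreeLength x y σ) = pr.transcript x y (pr.agreeLength x y σ) :=
    Nat.findGreatest_spec (P := fun k => σ.take k = pr.transcript x y k) (Nat.zero_le _) rfl
  calc σ.take k = (σ.take (pr.agreeLength x y σ)).take k := by rw [List.take_take, min_eq_left hk]
    _ = pr.transcript x y k := by rw [hspec, take_transcript pr x y hk]

lemma take_agreeLength : σ.take (pr.agreeLength x y σ) = pr.transcript x y (pr.agreeLength x y σ) :=
  (le_agreeLength_iff.1 le_rfl).2

lemma agreeLength_eq_length_iff :
    pr.agreeLength x y σ = σ.length ↔ σ = pr.transcript x y σ.length := by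
  refine ⟨fun h => ?_, fun h => agreeLength_le.antisymm ?_⟩
  · simpa [h] using (take_agreeLength : σ.take (pr.agreeLength x y σ) = _)
  · exact le_agreeLength_iff.2 ⟨le_rfl, by rwa [List.take_length]⟩

lemma getElem_agreeLength_ne (h : pr.agreeLength x y σ < σ.length) :
    σ[pr.agreeLength x y σ] ≠ pr.transcriptBit x y (pr.agreeLength x y σ) := by
  intro hbit
  have : pr.agreeLength x y σ + 1 ≤ pr.agreeLength x y σ := by
    refine le_agreeLength_iff.2 ⟨h, ?_⟩
    rw [List.take_succ_eq_append_getElem h, take_agreeLength, hbit, transcript_succ]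
  omega

lemma agreeLength_take (t : ℕ) :
    pr.agreeLength x y (σ.take t) = min (pr.agreeLength x y σ) t := by
  refine eq_of_forall_le_iff fun k => ?_
  simp only [le_min_iff, le_agreeLength_iff, List.length_take, List.take_take]
  constructor
  · rintro ⟨hk, htake⟩
    exact ⟨⟨by omega, by rwa [min_eq_left (by omega)] at htake⟩, by omega⟩
  · rintro ⟨⟨hk, htake⟩, hkt⟩
    exact ⟨by omega, by rwa [min_eq_left hkt]⟩

lemma agreeLength_append_singleton (b : Bool) :
    pr.agreeLength x y (σ ++ [b]) =
      if pr.agreeLength x y σ = σ.length ∧ b = pr.transcriptBit x y σ.length then σ.length + 1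
      else pr.agreeLength x y σ := by
  have hprefix : min (pr.agreeLength x y (σ ++ [b])) σ.length = pr.agreeLength x y σ := by
    rw [← agreeLength_take, List.take_left]
  have hle : pr.agreeLength x y (σ ++ [b]) ≤ σ.length + 1 := by
    simpa using (agreeLength_le : pr.agreeLength x y (σ ++ [b]) ≤ _)
  have hfull : pr.agreeLength x y (σ ++ [b]) = σ.length + 1 ↔
      pr.agreeLength x y σ = σ.length ∧ b = pr.transcriptBit x y σ.length := by
    simpa [agreeLength_eq_length_iff, transcript_succ, List.append_singleton_inj] using
      agreeLength_eq_length_iff (pr := pr) (x := x) (y := y) (σ := σ ++ [b])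
  split_ifs with h
  · exact hfull.2 h
  · have := mt hfull.1 h
    omega

end AltProtocol

namespace FeedbackSimulation

open AltProtocol

section Phi

/-- The correction term `w` of the potential, for `g` correct bits out of `m` simulated ones in
round `i`, after a deletion iff `c`; the speaker of round `i` owns position `k` iff
`k % 2 = i % 2`. -/
def slack (g m : ℕ) (c : Bool) (i : ℕ) : ℕ :=
  if g = m then (if m % 2 = i % 2 then (if c then 2 else 0) else 1)
  else if (m - g) % 2 = 0 then (if g % 2 = i % 2 then 0 else 1)
  else if g % 2 = i % 2 then 3 else if c then 4 else 2

def phi (g m : ℕ) (c : Bool) (i : ℕ) : ℤ := 2 * g - m - slack g m c i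

variable {g m : ℕ}

lemma phi_le (c : Bool) (i : ℕ) (hg : g ≤ m) : phi g m c i ≤ g := by
  unfold phi
  omega

lemma phi_pop (hg : g ≤ m) (c : Bool) (i : ℕ) :
    phi g m c i - 3 ≤ phi (min g (m - 2)) (m - 2) true (i + 1) ∧
      (g < m → phi g m c i + 1 ≤ phi (min g (m - 2)) (m - 2) true (i + 1)) := by
  unfold phi slack
  cases c <;> simp only [Bool.false_eq_true, ↓reduceIte] <;> split_ifs <;> omega

lemma phi_skip (hg : g ≤ m) (c : Bool) (i : ℕ) :
    phi g m c i - 3 ≤ phi g m false (i + 1) ∧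
      ((c = true ∨ m % 2 ≠ i % 2) → (g < m → g % 2 ≠ i % 2) →
        phi g m c i + 1 ≤ phi g m false (i + 1)) := by
  unfold phi slack
  cases c <;> simp only [Bool.false_eq_true, ↓reduceIte, true_or, false_or] <;> split_ifs <;> omega

lemma phi_push_stale {i : ℕ} (hg : g ≤ m) (hm : m % 2 = i % 2) :
    phi g m false i - 3 ≤ phi g (m + 1) false (i + 1) ∧
      (g < m → g % 2 ≠ i % 2 → phi g m false i + 1 ≤ phi g (m + 1) false (i + 1)) := by
  unfold phi slack
  simp only [Bool.false_eq_true, ↓reduceIte]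
  split_ifs <;> omega

lemma phi_push_correct {i : ℕ} (hm : m % 2 = i % 2) :
    phi m m false i + 1 ≤ phi (m + 1) (m + 1) false (i + 1) := by
  unfold phi slack
  split_ifs <;> omega

end Phi

def Consistent (f : List Bool → Bool) (par : ℕ) (σ : List Bool) : Prop :=
  ∀ k (hk : k < σ.length), k % 2 = par → σ[k] = f (σ.take k)

instance (f : List Bool → Bool) (par : ℕ) : DecidablePred (Consistent f par) :=
  fun _ => by unfold Consistent; infer_instance

section Consistent

variable {X Y : Type} {pr : AltProtocol X Y} {x : X} {y : Y} {f : List Bool → Bool} {par : ℕ}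
  {σ : List Bool}

lemma consistent_of_agreeLength_eq
    (hf : ∀ k, k % 2 = par → pr.transcriptBit x y k = f (pr.transcript x y k))
    (h : pr.agreeLength x y σ = σ.length) : Consistent f par σ := by
  obtain ⟨m, rfl⟩ : ∃ m, σ = pr.transcript x y m := ⟨_, agreeLength_eq_length_iff.1 h⟩
  intro k hk hpar
  rw [getElem_transcript, take_transcript pr x y (by simpa using hk.le), hf k hpar]

lemma agreeLength_mod_ne_of_consistent
    (hf : ∀ k, k % 2 = par → pr.transcriptBit x y k = f (pr.transcript x y k))
    (hc : Consistent f par σ) (hlt : pr.agreeLength x y σ < σ.length) :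
    pr.agreeLength x y σ % 2 ≠ par := fun hpar =>
  getElem_agreeLength_ne hlt (by rw [hc _ hlt hpar, take_agreeLength, hf _ hpar])

end Consistent

structure SimState where
  sim : List Bool
  round : ℕ
  afterPop : Bool

def step (st : SimState) (s : Fin 3) : SimState :=
  if s = 2 then ⟨st.sim.take (st.sim.length - 2), st.round + 1, true⟩
  else if st.afterPop = false ∧ st.sim.length % 2 = st.round % 2 then
    ⟨st.sim ++ [decide (s = 1)], st.round + 1, false⟩
  else ⟨st.sim, st.round + 1, false⟩

def run (h : List (Fin 3)) : SimState := h.foldl step ⟨[], 0, false⟩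

lemma run_append_singleton (h : List (Fin 3)) (s : Fin 3) : run (h ++ [s]) = step (run h) s := by
  simp [run]

lemma round_run (h : List (Fin 3)) : (run h).round = h.length := by
  induction h using List.reverseRecOn with
  | nil => rfl
  | append_singleton h s ih =>
    rw [run_append_singleton, step]
    split_ifs <;> simp [ih]

def reply (f : List Bool → Bool) (par : ℕ) (st : SimState) : Fin 3 :=
  if Consistent f par st.sim then
    if st.afterPop = false ∧ st.sim.length % 2 = par ∧ f st.sim = true then 1 else 0
  else 2

section Potential

variable {X Y : Type} (pr : AltProtocol X Y) (x : X) (y : Y)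

def potential (st : SimState) : ℤ :=
  phi (pr.agreeLength x y st.sim) st.sim.length st.afterPop st.round

lemma potential_le_agreeLength (st : SimState) : potential pr x y st ≤ pr.agreeLength x y st.sim :=
  phi_le _ _ agreeLength_le

lemma potential_run_nil : potential pr x y (run []) = 0 := rfl

lemma potential_step_ge (st : SimState) (s : Fin 3) :
    potential pr x y st - 3 ≤ potential pr x y (step st s) := by
  obtain ⟨σ, i, c⟩ := st
  have hg : pr.agreeLength x y σ ≤ σ.length := agreeLength_le
  unfold step
  split_ifs with hpop hpush
  · simpa [potential, agreeLength_take] using (phi_pop hg c i).1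
  · obtain ⟨rfl, hm⟩ := hpush
    dsimp only [potential] at hm ⊢
    rw [agreeLength_append_singleton, List.length_append, List.length_singleton]
    split_ifs with hcorrect
    · rw [hcorrect.1]
      have := phi_push_correct (m := σ.length) hm
      omega
    · exact (phi_push_stale hg hm).1
  · exact (phi_skip hg c i).1

lemma potential_step_reply_ge {f : List Bool → Bool} {par : ℕ}
    (hf : ∀ k, k % 2 = par → pr.transcriptBit x y k = f (pr.transcript x y k))
    (st : SimState) (hpar : st.round % 2 = par) :
    potential pr x y st + 1 ≤ potential pr x y (step st (reply f par st)) := by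
  obtain ⟨σ, i, c⟩ := st
  subst hpar
  have hg : pr.agreeLength x y σ ≤ σ.length := agreeLength_le
  by_cases hcons : Consistent f (i % 2) σ
  · have hown := agreeLength_mod_ne_of_consistent hf hcons
    have hne : reply f (i % 2) ⟨σ, i, c⟩ ≠ 2 := by
      unfold reply; rw [if_pos hcons]; split_ifs <;> decide
    unfold step
    rw [if_neg hne]
    split_ifs with hpush
    · obtain ⟨rfl, hm⟩ := hpush
      have hbit : decide (reply f (i % 2) ⟨σ, i, false⟩ = 1) = f σ := by
        cases hfσ : f σ <;> simp [reply, hcons, hm, hfσ]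
      simp only [potential, hbit, agreeLength_append_singleton, List.length_append,
        List.length_singleton]
      rcases hg.eq_or_lt with hgm | hlt
      · have hσ := agreeLength_eq_length_iff.1 hgm
        have hfσ : f σ = pr.transcriptBit x y σ.length := by rw [hf _ hm, ← hσ]
        rw [if_pos ⟨hgm, hfσ⟩, hgm]
        exact phi_push_correct hm
      · rw [if_neg (by omega)]
        exact (phi_push_stale hg hm).2 hlt (hown hlt)
    · refine (phi_skip hg c i).2 ?_ hown
      cases c <;> simp_all
  · have hlt : pr.agreeLength x y σ < σ.length :=
      hg.lt_of_ne fun hgm => hcons (consistent_of_agreeLength_eq hf hgm)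
    simp only [step, reply, if_neg hcons, ↓reduceIte]
    simpa [potential, agreeLength_take] using (phi_pop hg c i).2 hlt

end Potential

def simulation {X Y : Type} (pr : AltProtocol X Y) (n N : ℕ) :
    FeedbackProtocol (Fin 3) X Y (List Bool) N where
  ord h := h.length % 2 = 0
  nextA x h := reply (pr.nextA x) 0 (run h)
  nextB y h := reply (pr.nextB y) 1 (run h)
  outA _ h := (run h).sim.take n
  outB _ h := (run h).sim.take n

section Simulation

variable {X Y : Type} (pr : AltProtocol X Y) (n : ℕ) {N : ℕ} (x : X) (y : Y) (r : Fin N → Fin 3)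

lemma simulation_fixedOrder : (simulation pr n N).FixedOrder := fun h h' hlen => by
  simp [simulation, hlen]

lemma run_take_succ (i : Fin N) :
    run ((List.ofFn r).take (i + 1)) = step (run ((List.ofFn r).take i)) (r i) := by
  rw [List.take_add_one, List.getElem?_ofFn, dif_pos i.isLt, Option.toList_some,
    run_append_singleton]

lemma sent_simulation (i : Fin N) :
    (simulation pr n N).sent x y r i =
      if i.val % 2 = 0 then reply (pr.nextA x) 0 (run ((List.ofFn r).take i))
      else reply (pr.nextB y) 1 (run ((List.ofFn r).take i)) := by
  simp [FeedbackProtocol.sent, simulation, i.isLt.le]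

lemma potential_step_sent_ge (i : Fin N) :
    potential pr x y (run ((List.ofFn r).take i)) + 1 ≤
      potential pr x y (step (run ((List.ofFn r).take i)) ((simulation pr n N).sent x y r i)) := by
  have hround : (run ((List.ofFn r).take i)).round = i := by simp [round_run, i.isLt.le]
  rw [sent_simulation]
  split_ifs <;>
    exact potential_step_reply_ge pr x y (fun k hk => by simp [transcriptBit, hk]) _ (by omega)

lemma sub_four_mul_corruptions_le_potential :
    (N : ℤ) - 4 * (simulation pr n N).corruptions x y r ≤ potential pr x y (run (List.ofFn r)) := by
  have key := sub_mul_card_filter_le_of_step_bounds (d := 3) (k := N)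
    (a := fun k => potential pr x y (run ((List.ofFn r).take k)))
    (bad := fun k => ∃ h : k < N, (simulation pr n N).sent x y r ⟨k, h⟩ ≠ r ⟨k, h⟩)
    (fun i hi => by
      simpa only [run_take_succ r ⟨i, hi⟩] using potential_step_ge pr x y _ (r ⟨i, hi⟩))
    (fun i hi hgood => by
      simp only [not_exists, not_not] at hgood
      simpa only [run_take_succ r ⟨i, hi⟩, hgood hi] using
        potential_step_sent_ge pr n x y r ⟨i, hi⟩)
  simp only [List.take_zero, potential_run_nil, sub_zero] at key
  rw [List.take_of_length_le (by simp)] at key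
  rw [FeedbackProtocol.corruptions, card_filter_univ_fin_eq]
  norm_num at key ⊢
  exact key

lemma take_sim_run_eq_transcript (h : n + 4 * (simulation pr n N).corruptions x y r ≤ N) :
    (run (List.ofFn r)).sim.take n = pr.transcript x y n := by
  have hpot := sub_four_mul_corruptions_le_potential pr n x y r
  have hle := potential_le_agreeLength pr x y (run (List.ofFn r))
  exact (le_agreeLength_iff.1 (by omega)).2

end Simulation

end FeedbackSimulation

open FeedbackSimulation

/-- For every ε with 0 < ε < 1/4 and every noiseless alternating binary
protocol π of length n, there is a deterministic feedback protocol over a 3-symbol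
alphabet with a fixed order of speaking, of length N ≤ c·n/ε for an absolute constant
c > 0, such that for every input pair and every noise pattern with at most
(1/4 − ε)·N corrupted rounds, both parties output the transcript π(x,y). -/
theorem feedback_fixed_order_large_alphabet :
    ∃ c : ℝ, 0 < c ∧
      ∀ (X Y : Type) (pr : AltProtocol X Y) (n : ℕ) (ε : ℝ),
        0 < ε → ε < 1/4 →
        ∃ (N : ℕ) (P : FeedbackProtocol (Fin 3) X Y (List Bool) N),
          P.FixedOrder ∧ (N : ℝ) ≤ c * n / ε ∧
          ∀ (x : X) (y : Y) (r : Fin N → Fin 3),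
            (P.corruptions x y r : ℝ) ≤ (1/4 - ε) * N →
            P.outA x (List.ofFn r) = pr.transcript x y n ∧
            P.outB y (List.ofFn r) = pr.transcript x y n := by
  refine ⟨1, one_pos, fun X Y pr n ε hε hε' => ?_⟩
  obtain ⟨N, hNlo, hNhi⟩ := exists_nat_mem_Icc_div n hε (by linarith)
  refine ⟨N, simulation pr n N, simulation_fixedOrder pr n, by rwa [one_mul], fun x y r hr => ?_⟩
  have hcount : n + 4 * (simulation pr n N).corruptions x y r ≤ N := by
    rw [div_le_iff₀ (by positivity)] at hNlo
    exact_mod_cast (by linarith : (n : ℝ) + 4 * (simulation pr n N).corruptions x y r ≤ N)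
  exact ⟨take_sim_run_eq_transcript pr n x y r hcount, take_sim_run_eq_transcript pr n x y r hcount⟩
end

section
/- For every finite alphabet Σ and every deterministic interactive protocol with noiseless feedback of length N over Σ, with a fixed order of speaking, in which Alice holds x ∈ {0,1}, Bob holds y ∈ {0,1}, and both parties are required to output the pair (x,y): there exist an input pair (x,y) and a noise pattern with at most ⌈N/4⌉ corrupted rounds under which some party's output differs from (x,y). -/
/-!
With a fixed order of speaking, one party, say Bob, speaks in some `m ≤ N / 2` rounds,
known in advance. The adversary never touches Alice's rounds; in Bob's first `⌈m / 2⌉`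
rounds it delivers what Bob would send holding `y₀`, and in his remaining rounds what he
would send holding `y₁`. The received word is then the same whether Bob holds `y₀` or
`y₁`, at the cost of at most `⌈m / 2⌉ ≤ ⌈N / 4⌉` corruptions in either case, so Alice's
output is wrong for one of the two inputs. If instead Alice speaks in at most half of the
rounds, exchange the roles of the parties.
-/

open Finset

namespace List

variable {α : Type*} (step : List α → α)

def generate : ℕ → List α
  | 0 => []
  | n + 1 => generate n ++ [step (generate n)]

@[simp]
theorem length_generate (n : ℕ) : (generate step n).length = n := by
  induction n with
  | zero => rfl
  | succ n ih => simp [generate, ih]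

theorem take_generate {i n : ℕ} (h : i ≤ n) : (generate step n).take i = generate step i := by
  induction n with
  | zero => rw [Nat.le_zero.mp h]; rfl
  | succ n ih =>
    rcases h.lt_or_eq with h | rfl
    · rw [generate, take_append_of_le_length (by simpa using Nat.le_of_lt_succ h),
        ih (Nat.le_of_lt_succ h)]
    · exact take_of_length_le (by simp)

theorem ofFn_step_generate (n : ℕ) :
    ofFn (fun i : Fin n => step (generate step i)) = generate step n := by
  induction n with
  | zero => rfl
  | succ n ih => rw [ofFn_succ_last]; simp [ih, generate]

end List

namespace Finset

variable {α : Type*} [LinearOrder α] (s : Finset α)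

theorem strictMonoOn_card_filter_lt : StrictMonoOn (fun i => #{j ∈ s | j < i}) s := by
  intro i hi i' _ hii'
  apply card_lt_card
  rw [ssubset_iff_of_subset (monotone_filter_right s fun j _ hj => hj.trans hii')]
  exact ⟨i, mem_filter.mpr ⟨hi, hii'⟩, by simp⟩

theorem card_filter_lt_lt_card {i : α} (hi : i ∈ s) : #{j ∈ s | j < i} < #s :=
  card_lt_card (filter_ssubset.mpr ⟨i, hi, lt_irrefl i⟩)

theorem card_filter_card_filter_lt_lt (k : ℕ) : #{i ∈ s | #{j ∈ s | j < i} < k} ≤ k := by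
  simpa using card_le_card_of_injOn (t := range k) (fun i => #{j ∈ s | j < i})
    (fun i hi => mem_range.mpr (mem_filter.mp hi).2)
    ((strictMonoOn_card_filter_lt s).injOn.mono (filter_subset _ _))

theorem card_filter_le_card_filter_lt (k : ℕ) : #{i ∈ s | k ≤ #{j ∈ s | j < i}} ≤ #s - k := by
  simpa using card_le_card_of_injOn (t := Ico k #s) (fun i => #{j ∈ s | j < i})
    (fun i hi => mem_Ico.mpr ⟨(mem_filter.mp hi).2,
      card_filter_lt_lt_card s (mem_filter.mp hi).1⟩)
    ((strictMonoOn_card_filter_lt s).injOn.mono (filter_subset _ _))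

end Finset

theorem Nat.add_one_div_two_le_ceil_div_four {m N : ℕ} (h : 2 * m ≤ N) :
    (m + 1) / 2 ≤ ⌈(N : ℚ) / 4⌉₊ := by
  cases hk : (m + 1) / 2 with
  | zero => exact Nat.zero_le _
  | succ j =>
    rw [Nat.add_one_le_ceil_iff, lt_div_iff₀ (by norm_num)]
    exact_mod_cast (by omega : j * 4 < N)

namespace FeedbackProtocol

variable {Γ X Y O : Type} {N : ℕ}

theorem FixedOrder.exists_speaker [Nonempty Γ] {P : FeedbackProtocol Γ X Y O N}
    (hfix : P.FixedOrder) : ∃ f : ℕ → Bool, ∀ h, P.ord h = f h.length := by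
  obtain ⟨c⟩ := ‹Nonempty Γ›
  exact ⟨fun n => P.ord (List.replicate n c), fun h => hfix _ _ (by simp)⟩

variable (P : FeedbackProtocol Γ X Y O N)

def hybridStep (x : X) (b : ℕ → Y) (h : List Γ) : Γ :=
  if P.ord h then P.nextA x h else P.nextB (b h.length) h

def hybridNoise (x : X) (b : ℕ → Y) : Fin N → Γ :=
  fun i => P.hybridStep x b (List.generate (P.hybridStep x b) i)

theorem ofFn_hybridNoise (x : X) (b : ℕ → Y) :
    List.ofFn (P.hybridNoise x b) = List.generate (P.hybridStep x b) N :=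
  List.ofFn_step_generate _ N

theorem sent_hybridNoise_ne {x : X} {y : Y} {b : ℕ → Y} {i : Fin N}
    (hi : P.sent x y (P.hybridNoise x b) i ≠ P.hybridNoise x b i) :
    P.ord (List.generate (P.hybridStep x b) i) = false ∧ b i ≠ y := by
  simp only [sent, ofFn_hybridNoise, List.take_generate _ i.isLt.le, hybridNoise, hybridStep,
    List.length_generate] at hi
  split_ifs at hi with hord
  · exact absurd rfl hi
  · exact ⟨by simpa using hord, fun hb => hi (hb ▸ rfl)⟩

theorem corruptions_hybridNoise_le [DecidableEq Γ] [DecidableEq Y] {f : ℕ → Bool}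
    (hf : ∀ h, P.ord h = f h.length) (x : X) (y : Y) (b : ℕ → Y) :
    P.corruptions x y (P.hybridNoise x b) ≤ #{n ∈ {n ∈ range N | f n = false} | b n ≠ y} := by
  refine card_le_card_of_injOn Fin.val (fun i hi => ?_) Fin.val_injective.injOn
  obtain ⟨hord, hb⟩ := P.sent_hybridNoise_ne (mem_filter.mp hi).2
  rw [hf, List.length_generate] at hord
  simp [hord, hb]

theorem exists_noise_corruptions_le_of_two_mul_card_le [DecidableEq Γ] [DecidableEq Y]
    {f : ℕ → Bool} (hf : ∀ h, P.ord h = f h.length) (hB : 2 * #{n ∈ range N | f n = false} ≤ N)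
    (x : X) (y₀ y₁ : Y) :
    ∃ r : Fin N → Γ,
      P.corruptions x y₀ r ≤ ⌈(N : ℚ) / 4⌉₊ ∧ P.corruptions x y₁ r ≤ ⌈(N : ℚ) / 4⌉₊ := by
  set s := {n ∈ range N | f n = false}
  set k := (#s + 1) / 2
  let b : ℕ → Y := fun n => if #{j ∈ s | j < n} < k then y₀ else y₁
  have hk : k ≤ ⌈(N : ℚ) / 4⌉₊ := Nat.add_one_div_two_le_ceil_div_four hB
  refine ⟨P.hybridNoise x b, ?_, ?_⟩
  · calc P.corruptions x y₀ (P.hybridNoise x b) ≤ #{n ∈ s | b n ≠ y₀} :=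
          P.corruptions_hybridNoise_le hf x y₀ b
      _ ≤ #{n ∈ s | k ≤ #{j ∈ s | j < n}} :=
          card_le_card (monotone_filter_right s fun n _ h => not_lt.mp fun hn => h (if_pos hn))
      _ ≤ #s - k := s.card_filter_le_card_filter_lt k
      _ ≤ ⌈(N : ℚ) / 4⌉₊ := by omega
  · calc P.corruptions x y₁ (P.hybridNoise x b) ≤ #{n ∈ s | b n ≠ y₁} :=
          P.corruptions_hybridNoise_le hf x y₁ b
      _ ≤ #{n ∈ s | #{j ∈ s | j < n} < k} :=
          card_le_card (monotone_filter_right s fun n _ h => by_contra fun hn => h (if_neg hn))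
      _ ≤ k := s.card_filter_card_filter_lt_lt k
      _ ≤ ⌈(N : ℚ) / 4⌉₊ := hk

def swap : FeedbackProtocol Γ Y X O N where
  ord h := !P.ord h
  nextA := P.nextB
  nextB := P.nextA
  outA := P.outB
  outB := P.outA

theorem swap_sent (x : X) (y : Y) (r : Fin N → Γ) (i : Fin N) :
    P.swap.sent y x r i = P.sent x y r i := by
  dsimp only [sent, swap]
  by_cases h : P.ord ((List.ofFn r).take i) <;> simp [h]

theorem corruptions_swap [DecidableEq Γ] (x : X) (y : Y) (r : Fin N → Γ) :
    P.swap.corruptions y x r = P.corruptions x y r := by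
  simp only [corruptions, swap_sent]

end FeedbackProtocol

open FeedbackProtocol in
theorem feedback_fixed_order_impossibility_quarter_general
    (Γ : Type) [DecidableEq Γ] [Nonempty Γ] (N : ℕ)
    (P : FeedbackProtocol Γ Bool Bool (Bool × Bool) N)
    (hfix : P.FixedOrder) :
    ∃ (x y : Bool) (r : Fin N → Γ),
      P.corruptions x y r ≤ ⌈(N : ℚ) / 4⌉₊ ∧
      (P.outA x (List.ofFn r) ≠ (x, y) ∨ P.outB y (List.ofFn r) ≠ (x, y)) := by
  obtain ⟨f, hf⟩ := hfix.exists_speaker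
  by_cases hB : 2 * #{n ∈ range N | f n = false} ≤ N
  · obtain ⟨r, h₀, h₁⟩ := P.exists_noise_corruptions_le_of_two_mul_card_le hf hB false false true
    by_cases hout : P.outA false (List.ofFn r) = (false, false)
    · exact ⟨false, true, r, h₁, .inl (by simp [hout])⟩
    · exact ⟨false, false, r, h₀, .inl hout⟩
  · have hA : 2 * #{n ∈ range N | (!f n) = false} ≤ N := by
      have := card_filter_add_card_filter_not (s := range N) (fun n => f n = false)
      simp only [card_range, Bool.not_eq_false', Bool.not_eq_false] at this hB ⊢
      omega
    obtain ⟨r, h₀, h₁⟩ := P.swap.exists_noise_corruptions_le_of_two_mul_card_le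
      (f := fun n => !f n) (fun h => by simp [swap, hf]) hA false false true
    rw [corruptions_swap] at h₀ h₁
    by_cases hout : P.outB false (List.ofFn r) = (false, false)
    · exact ⟨true, false, r, h₁, .inr (by simp [hout])⟩
    · exact ⟨false, false, r, h₀, .inr hout⟩

/-- For every finite alphabet Γ and every deterministic feedback protocol
of length N over Γ with a fixed order of speaking, in which Alice holds x ∈ {0,1},
Bob holds y ∈ {0,1}, and both parties must output the pair (x,y): there exist an input
pair (x,y) and a noise pattern with at most ⌈N/4⌉ corrupted rounds under which some
party's output differs from (x,y). -/
theorem feedback_fixed_order_impossibility_quarter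
    (Γ : Type) [Fintype Γ] [DecidableEq Γ] [Nonempty Γ] (N : ℕ)
    (P : FeedbackProtocol Γ Bool Bool (Bool × Bool) N)
    (hfix : P.FixedOrder) :
    ∃ (x y : Bool) (r : Fin N → Γ),
      P.corruptions x y r ≤ ⌈(N : ℚ) / 4⌉₊ ∧
      (P.outA x (List.ofFn r) ≠ (x, y) ∨ P.outB y (List.ofFn r) ≠ (x, y)) :=
  feedback_fixed_order_impossibility_quarter_general Γ N P hfix
end

section
/- For every finite alphabet Σ and every deterministic robust interactive protocol with noiseless feedback of length N over Σ, in which Alice holds x ∈ {0,1}, Bob holds y ∈ {0,1}, and both parties are required to output the pair (x,y): there exist an input pair (x,y) and a noise pattern with at most ⌈N/3⌉ corrupted rounds under which some party's output differs from (x,y). -/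
/-!
The adversary runs all four input pairs at once on one received string, built round by round,
with a budget `K = ⌈N/3⌉` of corruptions for each of the four executions. Since the speaker is a
function of the received string, the sent symbol of a round depends only on `x` (Alice speaks)
or only on `y` (Bob speaks); receiving one of the sent symbols therefore corrupts at most one
row, resp. one column, of the `2 × 2` grid of executions. If at the end both executions of a row
are within budget, Alice has the same input and the same received string in both, hence gives
the same output, which is wrong in one of them; similarly for a column and Bob.

That the adversary can get there is a game on the four remaining budgets: it keeps an edge
`(p, q)` of the grid (a row or a column) with `p, q ≥ 0` and
`rounds to go ≤ p + q + max (max s t + 1) 0`, where `(s, t)` is the opposite edge. The last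
term measures how long the opposite edge can still serve as a substitute for one end of
`(p, q)`. With all budgets equal to `K`, this holds initially as `N ≤ 3K + 1`.
-/

namespace BudgetGame

def slack (s t : ℤ) : ℤ := max (max s t + 1) 0

lemma slack_le_slack_sub_one_add_one (s t : ℤ) : slack s t ≤ slack (s - 1) (t - 1) + 1 := by
  unfold slack; omega

/-- The edge `(p, q)` of the grid is safe with `n` rounds to go; `(s, t)` is the opposite edge,
`s` adjacent to `p` and `t` to `q`. -/
def EdgeSafe (n : ℕ) (p q s t : ℤ) : Prop :=
  0 ≤ p ∧ 0 ≤ q ∧ n ≤ p + q + slack s t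

namespace EdgeSafe

variable {n : ℕ} {p q s t : ℤ}

lemma symm (h : EdgeSafe n p q s t) : EdgeSafe n q p t s := by
  obtain ⟨hp, hq, hn⟩ := h
  exact ⟨hq, hp, by unfold slack at *; omega⟩

lemma mono {p' q' s' t' : ℤ} (h : EdgeSafe n p q s t)
    (hp : p ≤ p') (hq : q ≤ q') (hs : s ≤ s') (ht : t ≤ t') : EdgeSafe n p' q' s' t' := by
  obtain ⟨hp0, hq0, hn⟩ := h
  exact ⟨hp0.trans hp, hq0.trans hq, by unfold slack at *; omega⟩

lemma step_opposite (h : EdgeSafe (n + 1) p q s t) : EdgeSafe n p q (s - 1) (t - 1) := by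
  obtain ⟨hp, hq, hn⟩ := h
  exact ⟨hp, hq, by have := slack_le_slack_sub_one_add_one s t; omega⟩

lemma step_across (h : EdgeSafe (n + 1) p q s t) :
    (EdgeSafe n p s (q - 1) (t - 1) ∨ EdgeSafe n p (q - 1) s (t - 1)) ∨
      (EdgeSafe n q t (p - 1) (s - 1) ∨ EdgeSafe n (p - 1) q (s - 1) t) := by
  obtain ⟨hp, hq, hn⟩ := h
  unfold EdgeSafe slack at *
  by_cases hneg : max s t < 0
  · -- the slack is `0`, so `p + q > n`: keep `(p, q)` and spend from a positive end
    by_cases hq1 : 1 ≤ q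
    · exact .inl (.inr ⟨hp, by omega, by omega⟩)
    · exact .inr (.inr ⟨by omega, hq, by omega⟩)
  · -- otherwise switch to the edge through the larger of `s`, `t`
    rcases max_choice s t with hmax | hmax
    · exact .inl (.inl ⟨hp, by omega, by omega⟩)
    · exact .inr (.inl ⟨hq, by omega, by omega⟩)

end EdgeSafe

/-- `n` rounds to go; `a, b, c, d` are the budgets of the executions on inputs
`(0,0), (0,1), (1,0), (1,1)`. -/
def Winning (n : ℕ) (a b c d : ℤ) : Prop :=
  EdgeSafe n a b c d ∨ EdgeSafe n c d a b ∨ EdgeSafe n a c b d ∨ EdgeSafe n b d a c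

namespace Winning

variable {n : ℕ} {a b c d : ℤ}

lemma mono {a' b' c' d' : ℤ} (H : Winning n a b c d)
    (ha : a ≤ a') (hb : b ≤ b') (hc : c ≤ c') (hd : d ≤ d') : Winning n a' b' c' d' := by
  rcases H with h | h | h | h
  · exact .inl (h.mono ha hb hc hd)
  · exact .inr (.inl (h.mono hc hd ha hb))
  · exact .inr (.inr (.inl (h.mono ha hc hb hd)))
  · exact .inr (.inr (.inr (h.mono hb hd ha hc)))

lemma transpose (H : Winning n a b c d) : Winning n a c b d := by
  unfold Winning at *
  tauto

lemma step_rows (H : Winning (n + 1) a b c d) :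
    Winning n a b (c - 1) (d - 1) ∨ Winning n (a - 1) (b - 1) c d := by
  rcases H with h | h | h | h
  · exact .inl (.inl h.step_opposite)
  · exact .inr (.inr (.inl h.step_opposite))
  · rcases h.step_across with (h' | h') | (h' | h')
    · exact .inl (.inl h')
    · exact .inl (.inr (.inr (.inl h')))
    · exact .inr (.inr (.inl h'))
    · exact .inr (.inr (.inr (.inl h')))
  · rcases h.step_across with (h' | h') | (h' | h')
    · exact .inl (.inl h'.symm)
    · exact .inl (.inr (.inr (.inr h')))
    · exact .inr (.inr (.inl h'.symm))
    · exact .inr (.inr (.inr (.inr h')))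

lemma step_cols (H : Winning (n + 1) a b c d) :
    Winning n a (b - 1) c (d - 1) ∨ Winning n (a - 1) b (c - 1) d :=
  H.transpose.step_rows.imp transpose transpose

lemma edge_nonneg (H : Winning n a b c d) :
    (0 ≤ a ∧ 0 ≤ b) ∨ (0 ≤ c ∧ 0 ≤ d) ∨ (0 ≤ a ∧ 0 ≤ c) ∨ (0 ≤ b ∧ 0 ≤ d) := by
  rcases H with h | h | h | h
  exacts [.inl ⟨h.1, h.2.1⟩, .inr (.inl ⟨h.1, h.2.1⟩), .inr (.inr (.inl ⟨h.1, h.2.1⟩)),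
    .inr (.inr (.inr ⟨h.1, h.2.1⟩))]

lemma of_le_three_mul_add_one {K : ℕ} (hn : n ≤ 3 * K + 1) : Winning n K K K K :=
  .inl ⟨by positivity, by positivity, by unfold slack; omega⟩

end Winning

end BudgetGame

lemma List.exists_ofFn_eq {α : Type*} {n : ℕ} {l : List α} (hl : l.length = n) :
    ∃ r : Fin n → α, List.ofFn r = l := by
  subst hl
  exact ⟨_, List.ofFn_getElem⟩

namespace FeedbackProtocol

variable {Γ : Type} [DecidableEq Γ] {N : ℕ}

section Executions

variable {X Y O : Type} (P : FeedbackProtocol Γ X Y O N)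

def sentAfter (x : X) (y : Y) (h : List Γ) : Γ :=
  if P.ord h then P.nextA x h else P.nextB y h

def corruptionsAlong (x : X) (y : Y) (h : List Γ) : ℕ :=
  ((Finset.range h.length).filter fun i => some (P.sentAfter x y (h.take i)) ≠ h[i]?).card

@[simp]
lemma corruptionsAlong_nil (x : X) (y : Y) : P.corruptionsAlong x y [] = 0 := by
  simp [corruptionsAlong]

lemma corruptionsAlong_append_singleton (x : X) (y : Y) (h : List Γ) (γ : Γ) :
    P.corruptionsAlong x y (h ++ [γ]) =
      P.corruptionsAlong x y h + if P.sentAfter x y h = γ then 0 else 1 := by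
  have hprefix : ((Finset.range h.length).filter fun i =>
      some (P.sentAfter x y ((h ++ [γ]).take i)) ≠ (h ++ [γ])[i]?) =
      (Finset.range h.length).filter fun i => some (P.sentAfter x y (h.take i)) ≠ h[i]? :=
    Finset.filter_congr fun i hi => by
      rw [Finset.mem_range] at hi
      rw [List.take_append_of_le_length hi.le, List.getElem?_append_left hi]
  have hlast : some (P.sentAfter x y ((h ++ [γ]).take h.length)) ≠ (h ++ [γ])[h.length]? ↔
      P.sentAfter x y h ≠ γ := by
    simp
  rw [corruptionsAlong, corruptionsAlong, List.length_append, List.length_singleton,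
    Finset.range_add_one, Finset.filter_insert, hprefix]
  simp only [hlast]
  by_cases hsent : P.sentAfter x y h = γ
  · simp [hsent]
  · simp [hsent, Finset.card_insert_of_notMem]

lemma corruptions_eq_corruptionsAlong_ofFn (x : X) (y : Y) (r : Fin N → Γ) :
    P.corruptions x y r = P.corruptionsAlong x y (List.ofFn r) := by
  unfold corruptions corruptionsAlong
  refine Finset.card_bij (fun i _ => i.val) ?_ (fun i _ j _ h => Fin.ext h) ?_
  · intro i hi
    simp only [Finset.mem_filter, Finset.mem_univ, true_and, Finset.mem_range,
      List.length_ofFn] at hi ⊢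
    simpa [sent, sentAfter] using hi
  · intro j hj
    simp only [Finset.mem_filter, Finset.mem_range, List.length_ofFn] at hj
    refine ⟨⟨j, hj.1⟩, Finset.mem_filter.2 ⟨Finset.mem_univ _, ?_⟩, rfl⟩
    simpa [sent, sentAfter, hj.1] using hj.2

end Executions

section Adversary

variable {O : Type} (P : FeedbackProtocol Γ Bool Bool O N) (K : ℕ)

def budget (x y : Bool) (h : List Γ) : ℤ :=
  K - P.corruptionsAlong x y h

def Winning (n : ℕ) (h : List Γ) : Prop :=
  BudgetGame.Winning n (P.budget K false false h) (P.budget K false true h)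
    (P.budget K true false h) (P.budget K true true h)

variable {P K}

lemma budget_append_singleton (x y : Bool) (h : List Γ) (γ : Γ) :
    P.budget K x y (h ++ [γ]) = P.budget K x y h - if P.sentAfter x y h = γ then 0 else 1 := by
  rw [budget, budget, corruptionsAlong_append_singleton]
  split_ifs <;> push_cast <;> ring

/-- The received symbol is the one sent in the row, resp. column, of executions that the budget
game spares; only the other row, resp. column, is corrupted. -/
lemma Winning.exists_append {n : ℕ} {h : List Γ} (H : P.Winning K (n + 1) h) :
    ∃ γ, P.Winning K n (h ++ [γ]) := by
  by_cases hA : P.ord h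
  · have hsent (x y : Bool) : P.sentAfter x y h = P.nextA x h := if_pos hA
    refine (BudgetGame.Winning.step_rows H).elim
      (fun H' => ⟨P.nextA false h, H'.mono ?_ ?_ ?_ ?_⟩)
      (fun H' => ⟨P.nextA true h, H'.mono ?_ ?_ ?_ ?_⟩)
    all_goals
      simp only [budget_append_singleton, hsent]
      split_ifs <;> omega
  · have hsent (x y : Bool) : P.sentAfter x y h = P.nextB y h := if_neg hA
    refine (BudgetGame.Winning.step_cols H).elim
      (fun H' => ⟨P.nextB false h, H'.mono ?_ ?_ ?_ ?_⟩)
      (fun H' => ⟨P.nextB true h, H'.mono ?_ ?_ ?_ ?_⟩)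
    all_goals
      simp only [budget_append_singleton, hsent]
      split_ifs <;> omega

lemma Winning.exists_append_eq_zero {n : ℕ} {h : List Γ} (H : P.Winning K n h) :
    ∃ h', h'.length = h.length + n ∧ P.Winning K 0 h' := by
  induction n generalizing h with
  | zero => exact ⟨h, rfl, H⟩
  | succ n ih =>
    obtain ⟨γ, Hγ⟩ := H.exists_append
    obtain ⟨h', hlen, H'⟩ := ih Hγ
    exact ⟨h', by simp [hlen]; omega, H'⟩

lemma winning_nil {n : ℕ} (hn : n ≤ 3 * K + 1) : P.Winning K n [] := by
  simpa [Winning, budget] using BudgetGame.Winning.of_le_three_mul_add_one hn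

end Adversary

/-- Two executions with the same input of Alice, resp. Bob, and the same received string look the
same to that party, but call for different outputs. -/
lemma Winning.exists_output_ne {P : FeedbackProtocol Γ Bool Bool (Bool × Bool) N} {K : ℕ}
    {r : Fin N → Γ} (H : P.Winning K 0 (List.ofFn r)) :
    ∃ x y, P.corruptions x y r ≤ K ∧
      (P.outA x (List.ofFn r) ≠ (x, y) ∨ P.outB y (List.ofFn r) ≠ (x, y)) := by
  have hK (x y : Bool) (hb : 0 ≤ P.budget K x y (List.ofFn r)) : P.corruptions x y r ≤ K := by
    rw [budget] at hb
    rw [corruptions_eq_corruptionsAlong_ofFn]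
    omega
  have hrow (x : Bool) (o : Bool × Bool) : o ≠ (x, false) ∨ o ≠ (x, true) :=
    (Ne.ne_or_ne o (by simp)).imp Ne.symm Ne.symm
  have hcol (y : Bool) (o : Bool × Bool) : o ≠ (false, y) ∨ o ≠ (true, y) :=
    (Ne.ne_or_ne o (by simp)).imp Ne.symm Ne.symm
  rcases BudgetGame.Winning.edge_nonneg H with ⟨h₀, h₁⟩ | ⟨h₀, h₁⟩ | ⟨h₀, h₁⟩ | ⟨h₀, h₁⟩
  · rcases hrow false (P.outA false (List.ofFn r)) with hne | hne
    exacts [⟨_, _, hK _ _ h₀, .inl hne⟩, ⟨_, _, hK _ _ h₁, .inl hne⟩]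
  · rcases hrow true (P.outA true (List.ofFn r)) with hne | hne
    exacts [⟨_, _, hK _ _ h₀, .inl hne⟩, ⟨_, _, hK _ _ h₁, .inl hne⟩]
  · rcases hcol false (P.outB false (List.ofFn r)) with hne | hne
    exacts [⟨_, _, hK _ _ h₀, .inr hne⟩, ⟨_, _, hK _ _ h₁, .inr hne⟩]
  · rcases hcol true (P.outB true (List.ofFn r)) with hne | hne
    exacts [⟨_, _, hK _ _ h₀, .inr hne⟩, ⟨_, _, hK _ _ h₁, .inr hne⟩]

end FeedbackProtocol

theorem feedback_arbitrary_order_impossibility_third_general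
    (Γ : Type) [DecidableEq Γ] (N : ℕ)
    (P : FeedbackProtocol Γ Bool Bool (Bool × Bool) N) :
    ∃ (x y : Bool) (r : Fin N → Γ),
      P.corruptions x y r ≤ ⌈(N : ℚ) / 3⌉₊ ∧
      (P.outA x (List.ofFn r) ≠ (x, y) ∨ P.outB y (List.ofFn r) ≠ (x, y)) := by
  have hN : N ≤ 3 * ⌈(N : ℚ) / 3⌉₊ + 1 := by
    have hceil : (N : ℚ) ≤ 3 * ⌈(N : ℚ) / 3⌉₊ := by
      linarith [Nat.le_ceil ((N : ℚ) / 3)]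
    have : N ≤ 3 * ⌈(N : ℚ) / 3⌉₊ := by exact_mod_cast hceil
    omega
  obtain ⟨h, hlen, H⟩ := (P.winning_nil hN).exists_append_eq_zero
  obtain ⟨r, rfl⟩ := List.exists_ofFn_eq (hlen.trans (zero_add N))
  obtain ⟨x, y, hK, hout⟩ := H.exists_output_ne
  exact ⟨x, y, r, hK, hout⟩

/-- For every finite alphabet Γ and every deterministic robust feedback
protocol of length N over Γ (arbitrary, possibly noise-dependent order of speaking),
in which Alice holds x ∈ {0,1}, Bob holds y ∈ {0,1}, and both parties must output
the pair (x,y): there exist an input pair (x,y) and a noise pattern with at most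
⌈N/3⌉ corrupted rounds under which some party's output differs from (x,y). -/
theorem feedback_arbitrary_order_impossibility_third
    (Γ : Type) [Fintype Γ] [DecidableEq Γ] [Nonempty Γ] (N : ℕ)
    (P : FeedbackProtocol Γ Bool Bool (Bool × Bool) N) :
    ∃ (x y : Bool) (r : Fin N → Γ),
      P.corruptions x y r ≤ ⌈(N : ℚ) / 3⌉₊ ∧
      (P.outA x (List.ofFn r) ≠ (x, y) ∨ P.outB y (List.ofFn r) ≠ (x, y)) :=
  feedback_arbitrary_order_impossibility_third_general Γ N P
end

section
/- For every deterministic interactive protocol with noiseless feedback of length N over the binary alphabet {0,1}, with a fixed order of speaking, in which Alice holds x from a set X with |X| ≥ 3, Bob holds y from a set Y with |Y| ≥ 3, and both parties are required to output the pair (x,y): there exist an input pair (x,y) and a noise pattern with at most ⌈N/6⌉ corrupted rounds (bit flips) under which some party's output differs from (x,y). -/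
/-!
Let `t = ⌈N / 6⌉`. Since `N ≤ 6t`, one of the parties, say Alice, speaks in at most `3t` rounds.
Fix Bob's input and run the protocol on three inputs of Alice against the same received
bits. In Bob's rounds the three executions send the same bit, which is delivered unchanged. In
Alice's rounds the adversary picks the received bit so that two candidates stay within `t`
corruptions while their counts plus the third one's count, capped at `t + 1`, grow by at most
one per round; a budget of `3t` rounds is enough for this. Bob then receives the same string
under two different inputs of Alice and outputs the wrong pair for one of them.
-/

open Finset

def mismatchCount (s : List Bool → Bool) {n : ℕ} (r : Fin n → Bool) : ℕ :=
  #{i : Fin n | s ((List.ofFn r).take i) ≠ r i}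

theorem mismatchCount_snoc (s : List Bool → Bool) {n : ℕ} (r : Fin n → Bool) (b : Bool) :
    mismatchCount s (Fin.snoc r b : Fin (n + 1) → Bool) =
      mismatchCount s r + if s (List.ofFn r) = b then 0 else 1 := by
  have hofFn : List.ofFn (Fin.snoc r b : Fin (n + 1) → Bool) = List.ofFn r ++ [b] := by
    rw [List.ofFn_succ']
    simp
  simp only [mismatchCount, card_filter, Fin.sum_univ_castSucc, hofFn, Fin.val_castSucc,
    Fin.val_last, Fin.snoc_castSucc, Fin.snoc_last, List.take_left' List.length_ofFn, ne_eq,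
    ite_not]
  congr 1
  refine sum_congr rfl fun i _ => ?_
  rw [List.take_append_of_le_length (by simp [i.isLt.le])]

def tally (c : Fin 3 → ℕ) (b : Fin 3 → Bool) (r : Bool) : Fin 3 → ℕ :=
  fun j => c j + if b j = r then 0 else 1

theorem tally_of_forall_eq {c : Fin 3 → ℕ} {b : Fin 3 → Bool} {r : Bool} (hb : ∀ j, b j = r) :
    tally c b r = c := by
  funext j
  simp [tally, hb j]

/-- The count of the third candidate `l` is capped at `t + 1`: beyond that `l` is abandoned. -/
def AdversaryInv (t m : ℕ) (c : Fin 3 → ℕ) : Prop :=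
  ∃ i j l, i ≠ j ∧ i ≠ l ∧ j ≠ l ∧ c i ≤ t ∧ c j ≤ t ∧ c i + c j + min (c l) (t + 1) ≤ m

theorem adversaryInv_zero (t : ℕ) : AdversaryInv t 0 0 :=
  ⟨0, 1, 2, by decide, by decide, by decide, by simp⟩

theorem AdversaryInv.exists_ne {t m : ℕ} {c : Fin 3 → ℕ} (h : AdversaryInv t m c) :
    ∃ i j, i ≠ j ∧ c i ≤ t ∧ c j ≤ t :=
  let ⟨i, j, _, hij, _, _, hi, hj, _⟩ := h
  ⟨i, j, hij, hi, hj⟩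

theorem exists_adversaryInv_tally_of_ne {t m : ℕ} {c : Fin 3 → ℕ} {b : Fin 3 → Bool}
    {i j l : Fin 3}
    (hm : m ≤ 3 * t) (hij : i ≠ j) (hil : i ≠ l) (hjl : j ≠ l) (hi : c i ≤ t) (hj : c j ≤ t)
    (hinv : c i + c j + min (c l) (t + 1) ≤ m) (hbij : b i ≠ b j) (hbl : b l = b i) :
    ∃ r, AdversaryInv t (m + 1) (tally c b r) := by
  have hbji : b j ≠ b i := Ne.symm hbij
  -- Side with `i` and `l` while `j` can absorb an error; once `j` is at `t`, either `l`
  -- replaces it, or `l` is abandoned and then `m ≤ 3 * t` leaves room for `i` to absorb one.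
  rcases Nat.lt_or_ge (c j) t with hjt | hjt
  · exact ⟨b i, i, j, l, hij, hil, hjl, by simp [tally]; omega, by simp [tally, hbji]; omega,
      by simp [tally, hbji, hbl]; omega⟩
  rcases le_or_gt (c l) t with hlt | hlt
  · exact ⟨b i, i, l, j, hil, hij, hjl.symm, by simp [tally]; omega, by simp [tally, hbl]; omega,
      by simp [tally, hbji, hbl]; omega⟩
  · refine ⟨b j, i, j, l, hij, hil, hjl, by simp [tally, hbij]; omega, by simp [tally]; omega, ?_⟩
    simp only [tally, if_neg hbij]
    split_ifs <;> omega

theorem AdversaryInv.exists_tally {t m : ℕ} {c : Fin 3 → ℕ} (h : AdversaryInv t m c)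
    (hm : m ≤ 3 * t) (b : Fin 3 → Bool) : ∃ r, AdversaryInv t (m + 1) (tally c b r) := by
  obtain ⟨i, j, l, hij, hil, hjl, hi, hj, hinv⟩ := h
  by_cases hbij : b i = b j
  · refine ⟨b i, i, j, l, hij, hil, hjl, by simp [tally]; omega, by simp [tally, hbij]; omega, ?_⟩
    simp only [tally, hbij]
    split_ifs <;> omega
  have hbl : b l = b i ∨ b l = b j := by
    cases hi : b i <;> cases hj : b j <;> cases b l <;> simp_all
  rcases hbl with hbl | hbl
  · exact exists_adversaryInv_tally_of_ne hm hij hil hjl hi hj hinv hbij hbl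
  · exact exists_adversaryInv_tally_of_ne hm hij.symm hjl hil hj hi (by omega) (Ne.symm hbij)
      hbl

theorem exists_adversaryInv_mismatchCount (s : Fin 3 → List Bool → Bool) (p : ℕ → Prop)
    [DecidablePred p] (t : ℕ) (hagree : ∀ h : List Bool, ¬ p h.length → ∀ j j', s j h = s j' h) :
    ∀ n, #{i ∈ range n | p i} ≤ 3 * t →
      ∃ r : Fin n → Bool, AdversaryInv t #{i ∈ range n | p i} fun j => mismatchCount (s j) r
  | 0, _ => ⟨Fin.elim0, by
      simp only [mismatchCount, univ_eq_empty, filter_empty, card_empty]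
      exact adversaryInv_zero t⟩
  | n + 1, hn => by
    have hcount : #{i ∈ range (n + 1) | p i} = #{i ∈ range n | p i} + if p n then 1 else 0 := by
      rw [range_add_one, filter_insert]
      split_ifs <;> simp
    obtain ⟨r, hr⟩ := exists_adversaryInv_mismatchCount s p t hagree n (by omega)
    have hsnoc (a : Bool) : (fun j => mismatchCount (s j) (Fin.snoc r a : Fin (n + 1) → Bool)) =
        tally (fun j => mismatchCount (s j) r) (fun j => s j (List.ofFn r)) a :=
      funext fun j => mismatchCount_snoc (s j) r a
    by_cases hp : p n
    · rw [if_pos hp] at hcount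
      obtain ⟨a, ha⟩ := hr.exists_tally (by omega) fun j => s j (List.ofFn r)
      exact ⟨Fin.snoc r a, by rwa [hcount, hsnoc]⟩
    · rw [if_neg hp, add_zero] at hcount
      refine ⟨Fin.snoc r (s 0 (List.ofFn r)), ?_⟩
      rwa [hcount, hsnoc, tally_of_forall_eq fun j => hagree _ (by simpa using hp) j 0]

namespace FeedbackProtocol

variable {X Y : Type} {N : ℕ} (P : FeedbackProtocol Bool X Y (X × Y) N)

theorem corruptions_eq_mismatchCount (x : X) (y : Y) (r : Fin N → Bool) :
    P.corruptions x y r =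
      mismatchCount (fun h => if P.ord h then P.nextA x h else P.nextB y h) r :=
  rfl

theorem exists_outB_ne (hfix : P.FixedOrder) {fX : Fin 3 → X} (hfX : Function.Injective fX)
    (y : Y) {t : ℕ} (hA : #{n ∈ range N | P.ord (List.replicate n false)} ≤ 3 * t) :
    ∃ x r, P.corruptions x y r ≤ t ∧ P.outB y (List.ofFn r) ≠ (x, y) := by
  have hagree (h : List Bool) (hB : ¬ P.ord (List.replicate h.length false)) (j j' : Fin 3) :
      (if P.ord h then P.nextA (fX j) h else P.nextB y h) =
        if P.ord h then P.nextA (fX j') h else P.nextB y h := by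
    rw [hfix h _ (List.length_replicate ..).symm, if_neg hB, if_neg hB]
  obtain ⟨r, hr⟩ := exists_adversaryInv_mismatchCount _ _ t hagree N hA
  obtain ⟨j, j', hjj', hj, hj'⟩ := hr.exists_ne
  by_cases hout : P.outB y (List.ofFn r) = (fX j, y)
  · refine ⟨fX j', r, (P.corruptions_eq_mismatchCount ..).trans_le hj', fun h => hjj' (hfX ?_)⟩
    simpa using hout.symm.trans h
  · exact ⟨fX j, r, (P.corruptions_eq_mismatchCount ..).trans_le hj, hout⟩

theorem exists_outA_ne (hfix : P.FixedOrder) {fY : Fin 3 → Y} (hfY : Function.Injective fY)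
    (x : X) {t : ℕ} (hB : #{n ∈ range N | ¬ P.ord (List.replicate n false)} ≤ 3 * t) :
    ∃ y r, P.corruptions x y r ≤ t ∧ P.outA x (List.ofFn r) ≠ (x, y) := by
  have hagree (h : List Bool) (hA : ¬ ¬ P.ord (List.replicate h.length false)) (j j' : Fin 3) :
      (if P.ord h then P.nextA x h else P.nextB (fY j) h) =
        if P.ord h then P.nextA x h else P.nextB (fY j') h := by
    rw [hfix h _ (List.length_replicate ..).symm, if_pos (not_not.1 hA), if_pos (not_not.1 hA)]
  obtain ⟨r, hr⟩ := exists_adversaryInv_mismatchCount _ _ t hagree N hB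
  obtain ⟨j, j', hjj', hj, hj'⟩ := hr.exists_ne
  by_cases hout : P.outA x (List.ofFn r) = (x, fY j)
  · refine ⟨fY j', r, (P.corruptions_eq_mismatchCount ..).trans_le hj', fun h => hjj' (hfY ?_)⟩
    simpa using hout.symm.trans h
  · exact ⟨fY j, r, (P.corruptions_eq_mismatchCount ..).trans_le hj, hout⟩

end FeedbackProtocol

/-- For every deterministic feedback protocol of length N over the binary
alphabet with a fixed order of speaking, with Alice's input from a set X with |X| ≥ 3
and Bob's input from a set Y with |Y| ≥ 3, where both parties must output the
pair (x,y): there exist an input pair (x,y) and a noise pattern with at most ⌈N/6⌉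
corrupted rounds (bit flips) under which some party's output differs from (x,y). -/
theorem feedback_fixed_order_binary_impossibility_sixth
    (X Y : Type) (fX : Fin 3 → X) (hfX : Function.Injective fX)
    (fY : Fin 3 → Y) (hfY : Function.Injective fY) (N : ℕ)
    (P : FeedbackProtocol Bool X Y (X × Y) N)
    (hfix : P.FixedOrder) :
    ∃ (x : X) (y : Y) (r : Fin N → Bool),
      P.corruptions x y r ≤ ⌈(N : ℚ) / 6⌉₊ ∧
      (P.outA x (List.ofFn r) ≠ (x, y) ∨ P.outB y (List.ofFn r) ≠ (x, y)) := by
  set t := ⌈(N : ℚ) / 6⌉₊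
  have hN : N ≤ 6 * t := by
    have : (N : ℚ) ≤ 6 * t := by linarith [Nat.le_ceil ((N : ℚ) / 6)]
    exact_mod_cast this
  have hsplit : #{n ∈ range N | P.ord (List.replicate n false)} +
      #{n ∈ range N | ¬ P.ord (List.replicate n false)} = N := by
    rw [card_filter_add_card_filter_not, card_range]
  by_cases hA : #{n ∈ range N | P.ord (List.replicate n false)} ≤ 3 * t
  · obtain ⟨x, r, hr, hout⟩ := P.exists_outB_ne hfix hfX (fY 0) hA
    exact ⟨x, fY 0, r, hr, .inr hout⟩
  · obtain ⟨y, r, hr, hout⟩ := P.exists_outA_ne hfix hfY (fX 0) (t := t) (by omega)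
    exact ⟨fX 0, y, r, hr, .inl hout⟩
end

section
/- For every ε with 0 < ε < 1/3 and every noiseless alternating binary protocol π of length n, there exists a deterministic interactive protocol Π over a binary erasure channel (alphabet {0,1}), with a fixed order of speaking, of length N ≤ c·n/ε for an absolute constant c > 0, such that for every input pair (x,y) and every erasure pattern E with |E| ≤ (1/3 − ε)·N, both parties output the transcript π(x,y). -/
/-- A deterministic interactive protocol of length `N` over an erasure channel with
alphabet `Γ` and a fixed order of speaking: `ord i = true` means Alice is the sender
of round `i`. A view item is `some s` for a symbol the party sent or received intact,
and `none` for an erased reception. There is no feedback: the sender does not learn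
whether its transmission was erased. Each party's next symbol and final output are
functions of its input and its own view. -/
structure ErasureProtocol (Γ X Y O : Type) (N : ℕ) where
  ord : Fin N → Bool
  nextA : X → List (Option Γ) → Γ
  nextB : Y → List (Option Γ) → Γ
  outA : X → List (Option Γ) → O
  outB : Y → List (Option Γ) → O

/-- The pair (Alice's view, Bob's view) after the first `i` rounds of the execution on
inputs `x, y` with erasure pattern `E`: the sender appends its sent symbol to its view;
the receiver appends `none` if the round is erased and the sent symbol otherwise. -/
def ErasureProtocol.views {Γ X Y O : Type} {N : ℕ} (P : ErasureProtocol Γ X Y O N)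
    (x : X) (y : Y) (E : Finset (Fin N)) : ℕ → List (Option Γ) × List (Option Γ)
  | 0 => ([], [])
  | i+1 =>
    let v := P.views x y E i
    if h : i < N then
      if P.ord ⟨i, h⟩ then
        let s := P.nextA x v.1
        (v.1 ++ [some s], v.2 ++ [if (⟨i, h⟩ : Fin N) ∈ E then none else some s])
      else
        let s := P.nextB y v.2
        (v.1 ++ [if (⟨i, h⟩ : Fin N) ∈ E then none else some s], v.2 ++ [some s])
    else v

/-!
Rounds are grouped into chunks of three, sent alternately by Alice and Bob. In each chunk the
sender transmits the parity codeword `(v, s, v ⊕ s)` of the last bit `v` of its current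
transcript and the sync bit `s = ⌊|T| / 2⌋ mod 2`: a single erasure in a chunk is corrected,
more are detected. The receiver accepts a decoded chunk only if the sync bit shows that the
sender is exactly one bit ahead, and then appends `v` and its own next bit. Hence the parties
always hold transcripts of the noiseless protocol whose lengths differ by one, and each phase
of two consecutive chunks with at most one erasure advances the shorter one. With
`N = 6 ⌈n / 3ε⌉` rounds, `(1/3 - ε) N` erasures spoil at most `(1 - 3ε) N / 6` phases, which
leaves at least `n` good ones.
-/

namespace ErasureSimulation

open Finset

section Transcript

variable {X Y : Type} (pr : AltProtocol X Y) (x : X) (y : Y)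

theorem transcript_length (m : ℕ) : (pr.transcript x y m).length = m := by
  induction m with
  | zero => rfl
  | succ m ih => simp [AltProtocol.transcript, ih]

theorem transcript_succ_of_even {m : ℕ} (hm : m % 2 = 0) :
    pr.transcript x y (m + 1) = pr.transcript x y m ++ [pr.nextA x (pr.transcript x y m)] := by
  simp [AltProtocol.transcript, transcript_length, hm]

theorem transcript_succ_of_odd {m : ℕ} (hm : m % 2 = 1) :
    pr.transcript x y (m + 1) = pr.transcript x y m ++ [pr.nextB y (pr.transcript x y m)] := by
  simp [AltProtocol.transcript, transcript_length, hm]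

theorem transcript_append_getLastD (m : ℕ) (d : Bool) :
    pr.transcript x y m ++ [(pr.transcript x y (m + 1)).getLastD d] =
      pr.transcript x y (m + 1) := by
  simp [AltProtocol.transcript]

theorem transcript_prefix {m m' : ℕ} (h : m ≤ m') :
    pr.transcript x y m <+: pr.transcript x y m' := by
  induction m', h using Nat.le_induction with
  | base => exact List.prefix_refl _
  | succ m' _ ih => exact ih.trans (List.prefix_append _ _)

theorem take_transcript {m m' : ℕ} (h : m ≤ m') :
    (pr.transcript x y m').take m = pr.transcript x y m := by
  simpa [transcript_length] using (List.prefix_iff_eq_take.1 (transcript_prefix pr x y h)).symm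

end Transcript

section Code

def encode (v s : Bool) (t : ℕ) : Bool := if t = 0 then v else if t = 1 then s else xor v s

def deliver {α : Type*} (E : Finset ℕ) (m : ℕ) (b : α) : Option α :=
  if m ∈ E then none else some b

def deliverChunk (E : Finset ℕ) (o : ℕ) (w : ℕ → Bool) : List (Option Bool) :=
  [deliver E o (w 0), deliver E (o + 1) (w 1), deliver E (o + 2) (w 2)]

def decode : List (Option Bool) → Option (Bool × Bool)
  | [some a, some b, _] => some (a, b)
  | [some a, none, some c] => some (a, xor a c)
  | [none, some b, some c] => some (xor b c, b)
  | _ => none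

theorem decode_deliverChunk_encode (E : Finset ℕ) (o : ℕ) (v s : Bool) :
    decode (deliverChunk E o (encode v s)) = none ∨
      decode (deliverChunk E o (encode v s)) = some (v, s) := by
  by_cases h₀ : o ∈ E <;> by_cases h₁ : o + 1 ∈ E <;> by_cases h₂ : o + 2 ∈ E <;>
    cases v <;> cases s <;> simp [deliverChunk, deliver, encode, decode, h₀, h₁, h₂]

theorem decode_deliverChunk_encode_of_card_le_one {E : Finset ℕ} {j : ℕ}
    (hE : #{m ∈ E | m / 3 = j} ≤ 1) (v s : Bool) :
    decode (deliverChunk E (3 * j) (encode v s)) = some (v, s) := by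
  have hE' : ∀ a b, a / 3 = j → b / 3 = j → a ≠ b → ¬(a ∈ E ∧ b ∈ E) :=
    fun a b ha hb hab h => hab (card_le_one.1 hE a (by simp [h.1, ha]) b (by simp [h.2, hb]))
  have h01 := hE' (3 * j) (3 * j + 1) (by omega) (by omega) (by omega)
  have h02 := hE' (3 * j) (3 * j + 2) (by omega) (by omega) (by omega)
  have h12 := hE' (3 * j + 1) (3 * j + 2) (by omega) (by omega) (by omega)
  by_cases h₀ : 3 * j ∈ E <;> by_cases h₁ : 3 * j + 1 ∈ E <;> by_cases h₂ : 3 * j + 2 ∈ E <;>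
    simp only [h₀, h₁, h₂, and_self, not_true_eq_false, and_false, false_and] at h01 h02 h12 <;>
    cases v <;> cases s <;> simp [deliverChunk, deliver, encode, decode, h₀, h₁, h₂]

end Code

section Update

def sync (m : ℕ) : Bool := decide (m / 2 % 2 = 1)

theorem sync_add_two_ne (m : ℕ) : sync (m + 2) ≠ sync m := by
  simp only [sync, ne_eq, decide_eq_decide]
  omega

def announce (T : List Bool) : ℕ → Bool := encode (T.getLastD false) (sync T.length)

def update (next : List Bool → Bool) (T : List Bool) (r : List (Option Bool)) : List Bool :=
  match decode r with
  | some (v, s) => if s = sync (T.length + 1) then T ++ [v] ++ [next (T ++ [v])] else T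
  | none => T

variable {next : List Bool → Bool} {T : List Bool} {r : List (Option Bool)}

theorem update_of_decode_eq_none (hd : decode r = none) : update next T r = T := by
  simp [update, hd]

theorem update_of_decode_eq_some_of_ne {v s : Bool} (hd : decode r = some (v, s))
    (hs : s ≠ sync (T.length + 1)) : update next T r = T := by
  simp [update, hd, hs]

variable {X Y : Type} (pr : AltProtocol X Y) (x : X) (y : Y)

theorem update_transcript {m : ℕ}
    (hnext : pr.transcript x y (m + 2) =
      pr.transcript x y (m + 1) ++ [next (pr.transcript x y (m + 1))])
    (hd : decode r = some ((pr.transcript x y (m + 1)).getLastD false, sync (m + 1))) :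
    update next (pr.transcript x y m) r = pr.transcript x y (m + 2) := by
  simp only [update, hd, transcript_length, if_true, transcript_append_getLastD, hnext]

theorem update_deliverChunk_announce (E : Finset ℕ) (o : ℕ) {a b : ℕ}
    (hab : b = a + 1 ∨ a = b + 1)
    (hnext : b = a + 1 → pr.transcript x y (a + 2) =
      pr.transcript x y (a + 1) ++ [next (pr.transcript x y (a + 1))]) :
    update next (pr.transcript x y a) (deliverChunk E o (announce (pr.transcript x y b))) =
        pr.transcript x y a ∨
      b = a + 1 ∧ update next (pr.transcript x y a)
        (deliverChunk E o (announce (pr.transcript x y b))) = pr.transcript x y (a + 2) := by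
  rw [announce, transcript_length]
  rcases decode_deliverChunk_encode E o ((pr.transcript x y b).getLastD false) (sync b)
    with hd | hd
  · exact .inl (update_of_decode_eq_none hd)
  · rcases hab with rfl | rfl
    · exact .inr ⟨rfl, update_transcript pr x y (hnext rfl) hd⟩
    · exact .inl (update_of_decode_eq_some_of_ne hd
        (by rw [transcript_length]; exact (sync_add_two_ne b).symm))

theorem update_deliverChunk_announce_of_card_le_one {E : Finset ℕ} {j : ℕ}
    (hE : #{m ∈ E | m / 3 = j} ≤ 1) {a : ℕ}
    (hnext : pr.transcript x y (a + 2) =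
      pr.transcript x y (a + 1) ++ [next (pr.transcript x y (a + 1))]) :
    update next (pr.transcript x y a)
        (deliverChunk E (3 * j) (announce (pr.transcript x y (a + 1)))) =
      pr.transcript x y (a + 2) := by
  refine update_transcript pr x y hnext ?_
  rw [announce, transcript_length]
  exact decode_deliverChunk_encode_of_card_le_one hE _ _

end Update

section States

variable {X Y : Type} (pr : AltProtocol X Y) (x : X) (y : Y) (E : Finset ℕ)

/-- The transcripts held by Alice and Bob after the first `j` chunks; chunk `j` occupies the
rounds `3j, 3j + 1, 3j + 2` and is sent by Alice iff `j` is even. -/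
def states : ℕ → List Bool × List Bool
  | 0 => ([pr.nextA x []], [])
  | j + 1 =>
    let S := states j
    if j % 2 = 0 then (S.1, update (pr.nextB y) S.2 (deliverChunk E (3 * j) (announce S.1)))
    else (update (pr.nextA x) S.1 (deliverChunk E (3 * j) (announce S.2)), S.2)

/-- Both parties know the first `ℓ` bits of the transcript, and the party computing bit `ℓ + 1`
(Alice iff `ℓ` is even) knows that one too. -/
def level (ℓ : ℕ) : List Bool × List Bool :=
  (pr.transcript x y (ℓ + 1 - ℓ % 2), pr.transcript x y (ℓ + ℓ % 2))

variable {pr x y E}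

theorem level_of_even {ℓ : ℕ} (hℓ : ℓ % 2 = 0) :
    level pr x y ℓ = (pr.transcript x y (ℓ + 1), pr.transcript x y ℓ) := by
  simp [level, hℓ]

theorem level_of_odd {ℓ : ℕ} (hℓ : ℓ % 2 = 1) :
    level pr x y ℓ = (pr.transcript x y ℓ, pr.transcript x y (ℓ + 1)) := by
  simp [level, hℓ]

theorem states_zero : states pr x y E 0 = level pr x y 0 := by
  simp [states, level, AltProtocol.transcript]

theorem states_succ_of_even {j : ℕ} (hj : j % 2 = 0) :
    states pr x y E (j + 1) = ((states pr x y E j).1, update (pr.nextB y) (states pr x y E j).2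
      (deliverChunk E (3 * j) (announce (states pr x y E j).1))) := by
  simp [states, hj]

theorem states_succ_of_odd {j : ℕ} (hj : j % 2 = 1) :
    states pr x y E (j + 1) = (update (pr.nextA x) (states pr x y E j).1
      (deliverChunk E (3 * j) (announce (states pr x y E j).2)), (states pr x y E j).2) := by
  simp [states, hj]

theorem states_succ_eq_level {j ℓ : ℕ} (h : states pr x y E j = level pr x y ℓ) :
    states pr x y E (j + 1) = level pr x y ℓ ∨
      j % 2 = ℓ % 2 ∧ states pr x y E (j + 1) = level pr x y (ℓ + 1) := by
  rcases Nat.mod_two_eq_zero_or_one ℓ with hℓ | hℓ <;>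
    rcases Nat.mod_two_eq_zero_or_one j with hj | hj
  · rw [level_of_even hℓ] at h
    rw [states_succ_of_even hj, h, level_of_even hℓ, level_of_odd (by omega)]
    rcases update_deliverChunk_announce pr x y E (3 * j) (a := ℓ) (b := ℓ + 1) (.inl rfl)
      (fun _ => transcript_succ_of_odd pr x y (by omega)) (next := pr.nextB y) with hs | ⟨-, hs⟩
    · exact .inl (by rw [hs])
    · exact .inr ⟨by omega, by rw [hs]⟩
  · rw [level_of_even hℓ] at h
    rw [states_succ_of_odd hj, h, level_of_even hℓ]
    rcases update_deliverChunk_announce pr x y E (3 * j) (a := ℓ + 1) (b := ℓ) (.inr rfl)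
      (by omega) (next := pr.nextA x) with hs | ⟨habs, -⟩
    · exact .inl (by rw [hs])
    · omega
  · rw [level_of_odd hℓ] at h
    rw [states_succ_of_even hj, h, level_of_odd hℓ]
    rcases update_deliverChunk_announce pr x y E (3 * j) (a := ℓ + 1) (b := ℓ) (.inr rfl)
      (by omega) (next := pr.nextB y) with hs | ⟨habs, -⟩
    · exact .inl (by rw [hs])
    · omega
  · rw [level_of_odd hℓ] at h
    rw [states_succ_of_odd hj, h, level_of_odd hℓ, level_of_even (by omega)]
    rcases update_deliverChunk_announce pr x y E (3 * j) (a := ℓ) (b := ℓ + 1) (.inl rfl)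
      (fun _ => transcript_succ_of_even pr x y (by omega)) (next := pr.nextA x) with hs | ⟨-, hs⟩
    · exact .inl (by rw [hs])
    · exact .inr ⟨by omega, by rw [hs]⟩

theorem exists_states_succ_eq_level {j ℓ : ℕ} (h : states pr x y E j = level pr x y ℓ) :
    ∃ ℓ', ℓ ≤ ℓ' ∧ states pr x y E (j + 1) = level pr x y ℓ' :=
  (states_succ_eq_level h).elim (fun h => ⟨ℓ, le_rfl, h⟩) (fun h => ⟨ℓ + 1, by omega, h.2⟩)

theorem states_succ_eq_level_succ {j ℓ : ℕ} (h : states pr x y E j = level pr x y ℓ)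
    (hjℓ : j % 2 = ℓ % 2) (hE : #{m ∈ E | m / 3 = j} ≤ 1) :
    states pr x y E (j + 1) = level pr x y (ℓ + 1) := by
  rcases Nat.mod_two_eq_zero_or_one ℓ with hℓ | hℓ
  · rw [level_of_even hℓ] at h
    rw [states_succ_of_even (by omega), h, level_of_odd (by omega),
      update_deliverChunk_announce_of_card_le_one pr x y hE
        (transcript_succ_of_odd pr x y (by omega))]
  · rw [level_of_odd hℓ] at h
    rw [states_succ_of_odd (by omega), h, level_of_even (by omega),
      update_deliverChunk_announce_of_card_le_one pr x y hE
        (transcript_succ_of_even pr x y (by omega))]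

theorem card_filter_div_three_le (E : Finset ℕ) {p i : ℕ} (hi : i < 2) :
    #{m ∈ E | m / 3 = 2 * p + i} ≤ #{m ∈ E | m / 6 = p} :=
  card_le_card (monotone_filter_right E fun _ _ _ => by omega)

theorem states_add_two_eq_level_of_card_le_one {p ℓ : ℕ}
    (h : states pr x y E (2 * p) = level pr x y ℓ) (hE : #{m ∈ E | m / 6 = p} ≤ 1) :
    states pr x y E (2 * p + 2) = level pr x y (2 * (ℓ / 2) + 2) := by
  have h₀ : #{m ∈ E | m / 3 = 2 * p} ≤ 1 :=
    (card_filter_div_three_le E (i := 0) (by omega)).trans hE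
  have h₁ : #{m ∈ E | m / 3 = 2 * p + 1} ≤ 1 := (card_filter_div_three_le E (by omega)).trans hE
  rcases Nat.mod_two_eq_zero_or_one ℓ with hℓ | hℓ
  · rw [states_succ_eq_level_succ (states_succ_eq_level_succ h (by omega) h₀) (by omega) h₁]
    congr 1
    omega
  · have h' : states pr x y E (2 * p + 1) = level pr x y ℓ :=
      (states_succ_eq_level h).resolve_right (by omega)
    rw [states_succ_eq_level_succ h' (by omega) h₁]
    congr 1
    omega

theorem exists_states_two_mul_eq_level (p : ℕ) :
    ∃ ℓ, #{q ∈ range p | #{m ∈ E | m / 6 = q} ≤ 1} ≤ ℓ ∧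
      states pr x y E (2 * p) = level pr x y ℓ := by
  induction p with
  | zero => exact ⟨0, by simp, states_zero⟩
  | succ p ih =>
    obtain ⟨ℓ, hcount, h⟩ := ih
    rw [range_add_one, filter_insert, show 2 * (p + 1) = 2 * p + 2 by ring]
    by_cases hE : #{m ∈ E | m / 6 = p} ≤ 1
    · refine ⟨2 * (ℓ / 2) + 2, ?_, states_add_two_eq_level_of_card_le_one h hE⟩
      rw [if_pos hE]
      exact (card_insert_le _ _).trans (by omega)
    · obtain ⟨ℓ₁, hℓ₁, h₁⟩ := exists_states_succ_eq_level h
      obtain ⟨ℓ₂, hℓ₂, h₂⟩ := exists_states_succ_eq_level h₁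
      exact ⟨ℓ₂, by rw [if_neg hE]; omega, h₂⟩

end States

section Simulation

variable {X Y : Type}

def replay (next : List Bool → Bool) (T₀ : List Bool) (o : ℕ) (view : List (Option Bool)) :
    ℕ → List Bool
  | 0 => T₀
  | k + 1 => update next (replay next T₀ o view k) ((view.drop (6 * k + o)).take 3)

/-- A view of length `i` is in phase `i / 6`, made of Alice's chunk and then Bob's; Bob, speaking
in the second half, replays Alice's chunk of the current phase as well. -/
def simulation (pr : AltProtocol X Y) (n N : ℕ) : ErasureProtocol Bool X Y (List Bool) N where
  ord i := decide (i.val / 3 % 2 = 0)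
  nextA x v := announce (replay (pr.nextA x) [pr.nextA x []] 3 v (v.length / 6)) (v.length % 3)
  nextB y v := announce (replay (pr.nextB y) [] 0 v (v.length / 6 + 1)) (v.length % 3)
  outA x v := (replay (pr.nextA x) [pr.nextA x []] 3 v (v.length / 6)).take n
  outB y v := (replay (pr.nextB y) [] 0 v (v.length / 6)).take n

variable (pr : AltProtocol X Y) (x : X) (y : Y) (E : Finset ℕ)

/- Closed forms, in terms of `states`, of the symbols sent and of the views in an execution
of `simulation`. -/
def sent (m : ℕ) : Bool :=
  announce (if m / 3 % 2 = 0 then (states pr x y E (m / 3)).1 else (states pr x y E (m / 3)).2)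
    (m % 3)

def viewA (i : ℕ) : List (Option Bool) :=
  (List.range i).map fun m =>
    if m / 3 % 2 = 0 then some (sent pr x y E m) else deliver E m (sent pr x y E m)

def viewB (i : ℕ) : List (Option Bool) :=
  (List.range i).map fun m =>
    if m / 3 % 2 = 0 then deliver E m (sent pr x y E m) else some (sent pr x y E m)

theorem take_three_drop_map_range {α : Type*} (f : ℕ → α) {i o : ℕ} (h : o + 3 ≤ i) :
    (((List.range i).map f).drop o).take 3 = [f o, f (o + 1), f (o + 2)] := by
  rw [← List.map_drop, ← List.map_take, List.range_eq_range', List.drop_range',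
    List.take_range'_of_length_ge (by omega)]
  simp [List.range']

variable {pr x y E}

theorem viewA_succ (i : ℕ) :
    viewA pr x y E (i + 1) = viewA pr x y E i ++
      [if i / 3 % 2 = 0 then some (sent pr x y E i) else deliver E i (sent pr x y E i)] := by
  simp [viewA, List.range_succ]

theorem viewB_succ (i : ℕ) :
    viewB pr x y E (i + 1) = viewB pr x y E i ++
      [if i / 3 % 2 = 0 then deliver E i (sent pr x y E i) else some (sent pr x y E i)] := by
  simp [viewB, List.range_succ]

theorem viewA_chunk {i j : ℕ} (hj : j % 2 = 1) (h : 3 * j + 3 ≤ i) :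
    ((viewA pr x y E i).drop (3 * j)).take 3 =
      deliverChunk E (3 * j) (announce (states pr x y E j).2) := by
  have h₀ : 3 * j / 3 = j ∧ 3 * j % 3 = 0 := by omega
  have h₁ : (3 * j + 1) / 3 = j ∧ (3 * j + 1) % 3 = 1 := by omega
  have h₂ : (3 * j + 2) / 3 = j ∧ (3 * j + 2) % 3 = 2 := by omega
  simp [viewA, take_three_drop_map_range _ h, deliverChunk, sent, h₀, h₁, h₂, hj]

theorem viewB_chunk {i j : ℕ} (hj : j % 2 = 0) (h : 3 * j + 3 ≤ i) :
    ((viewB pr x y E i).drop (3 * j)).take 3 =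
      deliverChunk E (3 * j) (announce (states pr x y E j).1) := by
  have h₀ : 3 * j / 3 = j ∧ 3 * j % 3 = 0 := by omega
  have h₁ : (3 * j + 1) / 3 = j ∧ (3 * j + 1) % 3 = 1 := by omega
  have h₂ : (3 * j + 2) / 3 = j ∧ (3 * j + 2) % 3 = 2 := by omega
  simp [viewB, take_three_drop_map_range _ h, deliverChunk, sent, h₀, h₁, h₂, hj]

theorem replay_viewA {i : ℕ} (k : ℕ) (h : 6 * k ≤ i) :
    replay (pr.nextA x) [pr.nextA x []] 3 (viewA pr x y E i) k = (states pr x y E (2 * k)).1 := by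
  induction k with
  | zero => rfl
  | succ k ih =>
    rw [replay, ih (by omega), show 6 * k + 3 = 3 * (2 * k + 1) by ring,
      viewA_chunk (by omega) (by omega), show 2 * (k + 1) = 2 * k + 1 + 1 by ring,
      states_succ_of_odd (j := 2 * k + 1) (by omega), states_succ_of_even (j := 2 * k) (by omega)]

theorem replay_viewB {i : ℕ} (k : ℕ) (h : 6 * k ≤ i + 3) :
    replay (pr.nextB y) [] 0 (viewB pr x y E i) k = (states pr x y E (2 * k)).2 := by
  induction k with
  | zero => rfl
  | succ k ih =>
    rw [replay, ih (by omega), show 6 * k + 0 = 3 * (2 * k) by ring,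
      viewB_chunk (by omega) (by omega), show 2 * (k + 1) = 2 * k + 1 + 1 by ring,
      states_succ_of_odd (j := 2 * k + 1) (by omega), states_succ_of_even (j := 2 * k) (by omega)]

theorem simulation_nextA_viewA (n N : ℕ) {i : ℕ} (hi : i / 3 % 2 = 0) :
    (simulation pr n N).nextA x (viewA pr x y E i) = sent pr x y E i := by
  simp only [simulation, viewA, List.length_map, List.length_range]
  rw [← viewA, replay_viewA (i / 6) (by omega), sent, if_pos hi,
    show 2 * (i / 6) = i / 3 by omega]

theorem simulation_nextB_viewB (n N : ℕ) {i : ℕ} (hi : i / 3 % 2 = 1) :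
    (simulation pr n N).nextB y (viewB pr x y E i) = sent pr x y E i := by
  simp only [simulation, viewB, List.length_map, List.length_range]
  rw [← viewB, replay_viewB (i / 6 + 1) (by omega), sent, if_neg (by omega),
    show 2 * (i / 6 + 1) = i / 3 + 1 by omega, states_succ_of_odd hi]

theorem simulation_outA_viewA (n N i : ℕ) :
    (simulation pr n N).outA x (viewA pr x y E i) =
      (states pr x y E (2 * (i / 6))).1.take n := by
  simp only [simulation, viewA, List.length_map, List.length_range]
  rw [← viewA, replay_viewA (i / 6) (by omega)]

theorem simulation_outB_viewB (n N i : ℕ) :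
    (simulation pr n N).outB y (viewB pr x y E i) =
      (states pr x y E (2 * (i / 6))).2.take n := by
  simp only [simulation, viewB, List.length_map, List.length_range]
  rw [← viewB, replay_viewB (i / 6) (by omega)]

variable (pr x y)

theorem views_simulation (n : ℕ) {N : ℕ} (E : Finset (Fin N)) {i : ℕ} (hi : i ≤ N) :
    (simulation pr n N).views x y E i =
      (viewA pr x y (E.map Fin.valEmbedding) i, viewB pr x y (E.map Fin.valEmbedding) i) := by
  induction i with
  | zero => rfl
  | succ i ih =>
    have hi' : i < N := hi
    have hmem : (⟨i, hi'⟩ : Fin N) ∈ E ↔ i ∈ E.map Fin.valEmbedding :=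
      (mem_map' Fin.valEmbedding).symm
    have hord : (simulation pr n N).ord ⟨i, hi'⟩ = decide (i / 3 % 2 = 0) := rfl
    rw [ErasureProtocol.views, ih hi'.le, dif_pos hi', hord, viewA_succ, viewB_succ]
    by_cases hc : i / 3 % 2 = 0
    · simp only [hc, decide_true, if_true, simulation_nextA_viewA n N hc, deliver, hmem]
    · simp only [hc, decide_false, Bool.false_eq_true, if_false,
        simulation_nextB_viewB n N (by omega : i / 3 % 2 = 1), deliver, hmem]

theorem simulation_correct (n P : ℕ) (E : Finset (Fin (6 * P)))
    (hE : n ≤ #{q ∈ range P | #{m ∈ E.map Fin.valEmbedding | m / 6 = q} ≤ 1}) :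
    (simulation pr n (6 * P)).outA x ((simulation pr n (6 * P)).views x y E (6 * P)).1 =
        pr.transcript x y n ∧
      (simulation pr n (6 * P)).outB y ((simulation pr n (6 * P)).views x y E (6 * P)).2 =
        pr.transcript x y n := by
  obtain ⟨ℓ, hℓ, hstates⟩ := exists_states_two_mul_eq_level (pr := pr) (x := x) (y := y) P
  rw [views_simulation pr x y n E le_rfl, simulation_outA_viewA, simulation_outB_viewB,
    show 6 * P / 6 = P by omega, hstates, level]
  exact ⟨take_transcript pr x y (by omega), take_transcript pr x y (by omega)⟩

end Simulation

theorem two_mul_le_two_mul_card_filter_add_card (E : Finset ℕ) (k P : ℕ) :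
    2 * P ≤ 2 * #{q ∈ range P | #{m ∈ E | m / k = q} ≤ 1} + #E := by
  have hsplit := card_filter_add_card_filter_not (s := range P)
    (fun q => #{m ∈ E | m / k = q} ≤ 1)
  rw [card_range] at hsplit
  set bad := {q ∈ range P | ¬#{m ∈ E | m / k = q} ≤ 1}
  have hbad : 2 * #bad ≤ #E :=
    calc 2 * #bad = ∑ _q ∈ bad, 2 := by simp [mul_comm]
      _ ≤ ∑ q ∈ bad, #{m ∈ E | m / k = q} :=
        sum_le_sum fun q hq => by simp only [bad, mem_filter] at hq; omega
      _ = #{m ∈ E | m / k ∈ bad} := sum_card_fiberwise_eq_card_filter _ _ _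
      _ ≤ #E := card_filter_le _ _
  omega

theorem le_card_filter_card_le_one {E : Finset ℕ} {n P : ℕ} {ε : ℝ}
    (hP : (n : ℝ) ≤ 3 * ε * P) (hE : (#E : ℝ) ≤ (1 / 3 - ε) * (6 * P)) :
    n ≤ #{q ∈ range P | #{m ∈ E | m / 6 = q} ≤ 1} := by
  have h : (2 * P : ℝ) ≤ 2 * #{q ∈ range P | #{m ∈ E | m / 6 = q} ≤ 1} + #E := by
    exact_mod_cast two_mul_le_two_mul_card_filter_add_card E 6 P
  have : (n : ℝ) ≤ #{q ∈ range P | #{m ∈ E | m / 6 = q} ≤ 1} := by linarith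
  exact_mod_cast this

theorem six_mul_ceil_div_le {n : ℕ} {ε : ℝ} (hε : 0 < ε) (hε' : ε < 1 / 3) :
    ((6 * ⌈(n : ℝ) / (3 * ε)⌉₊ : ℕ) : ℝ) ≤ 4 * n / ε := by
  rcases Nat.eq_zero_or_pos n with rfl | hn
  · simp
  have hceil := Nat.ceil_lt_add_one (by positivity : (0 : ℝ) ≤ n / (3 * ε))
  have hn' : (1 : ℝ) ≤ n := by exact_mod_cast hn
  have h6 : 6 ≤ 2 * n / ε := by
    rw [le_div_iff₀ hε]
    nlinarith
  calc ((6 * ⌈(n : ℝ) / (3 * ε)⌉₊ : ℕ) : ℝ) ≤ 6 * (n / (3 * ε) + 1) := by push_cast; linarith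
    _ = 2 * n / ε + 6 := by field_simp; ring
    _ ≤ 4 * n / ε := by linarith [show 4 * n / ε = 2 * n / ε + 2 * n / ε by ring]

end ErasureSimulation

/-- For every ε with 0 < ε < 1/3 and every noiseless alternating binary
protocol π of length n, there is a deterministic protocol over a binary erasure channel
with a fixed order of speaking, of length N ≤ c·n/ε for an absolute constant c > 0,
such that for every input pair (x,y) and every erasure pattern E with
|E| ≤ (1/3 − ε)·N, both parties output the transcript π(x,y). -/
theorem binary_erasure_one_third :
    ∃ c : ℝ, 0 < c ∧
      ∀ (X Y : Type) (pr : AltProtocol X Y) (n : ℕ) (ε : ℝ),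
        0 < ε → ε < 1/3 →
        ∃ (N : ℕ) (P : ErasureProtocol Bool X Y (List Bool) N),
          (N : ℝ) ≤ c * n / ε ∧
          ∀ (x : X) (y : Y) (E : Finset (Fin N)),
            (E.card : ℝ) ≤ (1/3 - ε) * N →
            P.outA x (P.views x y E N).1 = pr.transcript x y n ∧
            P.outB y (P.views x y E N).2 = pr.transcript x y n := by
  refine ⟨4, by norm_num, fun X Y pr n ε hε hε' => ?_⟩
  set P := ⌈(n : ℝ) / (3 * ε)⌉₊
  have hP : (n : ℝ) ≤ 3 * ε * P := by
    have := Nat.le_ceil ((n : ℝ) / (3 * ε))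
    rwa [div_le_iff₀ (by positivity), mul_comm] at this
  refine ⟨6 * P, ErasureSimulation.simulation pr n (6 * P),
    ErasureSimulation.six_mul_ceil_div_le hε hε', fun x y E hE => ?_⟩
  refine ErasureSimulation.simulation_correct pr x y n P E
    (ErasureSimulation.le_card_filter_card_le_one hP ?_)
  simpa using hE
end

section
/- Let T ∈ ℕ be a multiple of 3 and let x₀, x₁, x₂ : Fin T → Bool be three binary strings of length T. Define w : Fin T → Bool by letting w(i) be the majority value of x₀(i), x₁(i), x₂(i). Then there exist j ∈ {0,1,2} and R with 2T/3 ≤ R ≤ T such that the Hamming distance between the length-R prefixes of w and of x_j equals R − 2T/3. -/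
/-!
At most one of three Boolean values differs from their majority, so the Hamming distances from
the majority string `w` to `x₀, x₁, x₂` add up to at most `T`, and one of them, say to `x_j`, is
at most `T / 3`. Hence the prefix distance `d R` from `w` to `x_j` satisfies
`d T + 2 * (T / 3) ≤ T`. Going down from `R = T`, the slack `R - 2 * (T / 3) - d R` drops by at
most one per step since `d` is monotone, and it cannot stay positive down to `R = 0`, so it
vanishes somewhere.
-/

/-- The majority of three Boolean values: the value attained by at least two of them. -/
def majority3 (a b c : Bool) : Bool := (a && b) || (a && c) || (b && c)

open Finset

theorem card_filter_majority3_ne_le_one (v : Fin 3 → Bool) :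
    #{j | majority3 (v 0) (v 1) (v 2) ≠ v j} ≤ 1 := by
  revert v; decide

theorem sum_hammingDist_majority3_le {T : ℕ} (x : Fin 3 → Fin T → Bool) :
    ∑ j, hammingDist (fun i => majority3 (x 0 i) (x 1 i) (x 2 i)) (x j) ≤ T := by
  simp only [hammingDist, card_filter]
  rw [sum_comm]
  calc ∑ i : Fin T, ∑ j : Fin 3, (if majority3 (x 0 i) (x 1 i) (x 2 i) ≠ x j i then 1 else 0)
      ≤ ∑ _i : Fin T, 1 := sum_le_sum fun i _ => by
        rw [← card_filter]; exact card_filter_majority3_ne_le_one (fun j => x j i)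
    _ = T := by simp

def prefixHammingDist {T : ℕ} {β : Type*} [DecidableEq β] (x y : Fin T → β) (R : ℕ) : ℕ :=
  #{i | i.val < R ∧ x i ≠ y i}

section prefixHammingDist

variable {T : ℕ} {β : Type*} [DecidableEq β] (x y : Fin T → β)

theorem prefixHammingDist_mono : Monotone (prefixHammingDist x y) :=
  fun _ _ hRS => card_le_card <| monotone_filter_right _ fun _ _ h => ⟨h.1.trans_le hRS, h.2⟩

theorem prefixHammingDist_length : prefixHammingDist x y T = hammingDist x y := by
  simp only [prefixHammingDist, hammingDist, Fin.is_lt, true_and]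

end prefixHammingDist

theorem Monotone.exists_le_and_add_eq {f : ℕ → ℕ} (hf : Monotone f) {c n : ℕ}
    (h : f n + c ≤ n) : ∃ R ≤ n, f R + c = R := by
  induction n with
  | zero => exact ⟨0, le_rfl, by omega⟩
  | succ m ih =>
    rcases h.eq_or_lt with heq | hlt
    · exact ⟨m + 1, le_rfl, heq⟩
    · obtain ⟨R, hRm, hR⟩ := ih (by have := hf (Nat.le_add_right m 1); omega)
      exact ⟨R, hRm.trans (Nat.le_add_right m 1), hR⟩

theorem majority_prefix_distance_crossing_general (T : ℕ)
    (x₀ x₁ x₂ : Fin T → Bool) :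
    ∃ (j : Fin 3) (R : ℕ), 2 * (T / 3) ≤ R ∧ R ≤ T ∧
      (Finset.univ.filter fun i : Fin T =>
        i.val < R ∧ majority3 (x₀ i) (x₁ i) (x₂ i) ≠ ![x₀, x₁, x₂] j i).card
        = R - 2 * (T / 3) := by
  set x : Fin 3 → Fin T → Bool := ![x₀, x₁, x₂]
  set w : Fin T → Bool := fun i => majority3 (x 0 i) (x 1 i) (x 2 i)
  obtain ⟨j, hj⟩ : ∃ j, 3 * hammingDist w (x j) ≤ T := by
    have hsum : ∑ j, hammingDist w (x j) ≤ T := sum_hammingDist_majority3_le x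
    rw [Fin.sum_univ_three] at hsum
    by_contra! hbig
    have := hbig 0; have := hbig 1; have := hbig 2
    omega
  obtain ⟨R, hRT, hR⟩ := (prefixHammingDist_mono w (x j)).exists_le_and_add_eq
    (c := 2 * (T / 3)) (by rw [prefixHammingDist_length]; omega)
  refine ⟨j, R, by omega, hRT, ?_⟩
  change prefixHammingDist w (x j) R = _
  omega

/-- Let T be a multiple of 3 and x₀, x₁, x₂ binary strings of length T,
and w their pointwise majority. Then there exist j ∈ {0,1,2} and R with
2T/3 ≤ R ≤ T such that the Hamming distance between the length-R prefixes of w and of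
x_j equals R − 2T/3. -/
theorem majority_prefix_distance_crossing (T : ℕ) (hT : 3 ∣ T)
    (x₀ x₁ x₂ : Fin T → Bool) :
    ∃ (j : Fin 3) (R : ℕ), 2 * (T / 3) ≤ R ∧ R ≤ T ∧
      (Finset.univ.filter fun i : Fin T =>
        i.val < R ∧ majority3 (x₀ i) (x₁ i) (x₂ i) ≠ ![x₀, x₁, x₂] j i).card
        = R - 2 * (T / 3) :=
  majority_prefix_distance_crossing_general T x₀ x₁ x₂
end

section
/- There exists a binary code of block length 10 with 6 codewords and minimum distance 6: a set S ⊆ (Fin 10 → Bool) with |S| = 6 such that any two distinct elements of S have Hamming distance at least 6 (relative distance 6/10). -/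
/-!
Index the ten coordinates by the edges of the complete graph `K₅`. The words are the all-ones
word and, for each vertex, the indicator of its star. A star has `4` edges and two stars share
exactly one edge, so two star words are at distance `4 + 4 - 2 = 6`, and a star word is at distance
`10 - 4 = 6` from the all-ones word.
-/

open Finset

theorem hammingDist_decide_mem {ι : Type*} [Fintype ι] [DecidableEq ι] (s t : Finset ι) :
    hammingDist (fun i => decide (i ∈ s)) (fun i => decide (i ∈ t)) = #s + #t - 2 * #(s ∩ t) := by
  have hsymm : ({i | decide (i ∈ s) ≠ decide (i ∈ t)} : Finset ι) = s \ t ∪ t \ s := by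
    ext i; by_cases hs : i ∈ s <;> by_cases ht : i ∈ t <;> simp [hs, ht]
  rw [hammingDist, hsymm, card_union_of_disjoint disjoint_sdiff_sdiff]
  have hs := card_sdiff_add_card_inter s t
  have ht := card_sdiff_add_card_inter t s
  rw [inter_comm t s] at ht
  omega

theorem hammingDist_comp_equiv {ι ι' β : Type*} [Fintype ι] [Fintype ι'] [DecidableEq β]
    (σ : ι' ≃ ι) (x y : ι → β) : hammingDist (x ∘ σ) (y ∘ σ) = hammingDist x y :=
  card_equiv σ (by simp)

theorem exists_code_of_pairwise_le_hammingDist {κ ι ι' β : Type*} [Fintype κ] [Fintype ι]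
    [Fintype ι'] [DecidableEq β] (σ : ι' ≃ ι) (c : κ → ι → β) {d : ℕ} (hd : 0 < d)
    (hc : Pairwise fun a b => d ≤ hammingDist (c a) (c b)) :
    ∃ S : Finset (ι' → β), #S = Fintype.card κ ∧ ∀ u ∈ S, ∀ v ∈ S, u ≠ v → d ≤ hammingDist u v := by
  have hdist {a b : κ} (h : a ≠ b) : d ≤ hammingDist (c a ∘ σ) (c b ∘ σ) := by
    rw [hammingDist_comp_equiv]; exact hc h
  have hinj : Function.Injective fun a => c a ∘ σ := fun a b hab =>
    by_contra fun h => hammingDist_pos.1 (hd.trans_le (hdist h)) hab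
  refine ⟨univ.image fun a => c a ∘ σ, by rw [card_image_of_injective _ hinj, card_univ], ?_⟩
  simp only [mem_image, mem_univ, true_and]
  rintro _ ⟨a, rfl⟩ _ ⟨b, rfl⟩ hab
  exact hdist (ne_of_apply_ne (fun a => c a ∘ σ) hab)

namespace SimpleGraph

variable {V : Type*} [Fintype V] [DecidableEq V]

section Star

variable (G : SimpleGraph V) [DecidableRel G.Adj]

def edgeStar (v : V) : Finset G.edgeSet := {e | v ∈ (e : Sym2 V)}

theorem map_edgeStar (v : V) :
    (G.edgeStar v).map (Function.Embedding.subtype _) = G.incidenceFinset v := by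
  ext e
  simp [edgeStar, incidenceFinset_eq_filter, and_comm]

theorem card_edgeStar (v : V) : #(G.edgeStar v) = G.degree v := by
  rw [← card_map, map_edgeStar, card_incidenceFinset_eq_degree]

theorem card_edgeStar_inter_of_adj {v w : V} (h : G.Adj v w) :
    #(G.edgeStar v ∩ G.edgeStar w) = 1 := by
  rw [← card_map (f := Function.Embedding.subtype _), map_inter, map_edgeStar, map_edgeStar,
    ← card_singleton s(v, w)]
  congr 1
  rw [← coe_inj, coe_inter, coe_incidenceFinset, coe_incidenceFinset, coe_singleton]
  exact G.incidenceSet_inter_incidenceSet_of_adj h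

end Star

theorem card_edgeSet_top : Fintype.card (⊤ : SimpleGraph V).edgeSet = (Fintype.card V).choose 2 := by
  rw [← edgeFinset_card, card_edgeFinset_top_eq_card_choose_two]

def starCode : Option V → (⊤ : SimpleGraph V).edgeSet → Bool
  | none => fun _ => true
  | some v => fun e => decide (e ∈ edgeStar ⊤ v)

theorem hammingDist_starCode_none_some (v : V) :
    hammingDist (starCode none) (starCode (some v)) =
      (Fintype.card V).choose 2 - (Fintype.card V - 1) := by
  have hnone : starCode (none : Option V) = fun e => decide (e ∈ univ) := by
    funext e; simp [starCode]
  rw [hnone, starCode, hammingDist_decide_mem, univ_inter, card_univ, card_edgeSet_top,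
    card_edgeStar, complete_graph_degree]
  omega

theorem hammingDist_starCode_some_some {v w : V} (h : v ≠ w) :
    hammingDist (starCode (some v)) (starCode (some w)) = 2 * (Fintype.card V - 2) := by
  rw [starCode, starCode, hammingDist_decide_mem, card_edgeStar, card_edgeStar,
    card_edgeStar_inter_of_adj _ h, complete_graph_degree, complete_graph_degree]
  omega

theorem pairwise_le_hammingDist_starCode {d : ℕ}
    (hd₁ : d ≤ (Fintype.card V).choose 2 - (Fintype.card V - 1)) (hd₂ : d ≤ 2 * (Fintype.card V - 2)) :
    Pairwise fun o o' : Option V => d ≤ hammingDist (starCode o) (starCode o') := by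
  rintro (_ | v) (_ | w) h
  · exact absurd rfl h
  · rwa [hammingDist_starCode_none_some]
  · rwa [hammingDist_comm, hammingDist_starCode_none_some]
  · rwa [hammingDist_starCode_some_some (by simpa using h)]

end SimpleGraph

/-- There exists a binary code of block length 10 with 6 codewords and
minimum distance 6: a set S ⊆ (Fin 10 → Bool) with |S| = 6 such that any two distinct
elements of S have Hamming distance at least 6. -/
theorem code_length10_six_words_distance6 :
    ∃ S : Finset (Fin 10 → Bool), S.card = 6 ∧
      ∀ u ∈ S, ∀ v ∈ S, u ≠ v → 6 ≤ hammingDist u v := by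
  have hcard : Fintype.card (Fin 10) = Fintype.card (⊤ : SimpleGraph (Fin 5)).edgeSet := by
    rw [SimpleGraph.card_edgeSet_top]; rfl
  simpa using exists_code_of_pairwise_le_hammingDist (Fintype.equivOfCardEq hcard)
    SimpleGraph.starCode (by norm_num)
    (SimpleGraph.pairwise_le_hammingDist_starCode (V := Fin 5) (by decide) (by decide))
end

section
/- Let ε ∈ (0, 1/3) and n, N ∈ ℕ with N ≥ 1. Let m₁, …, m_N and e₁, …, e_N be nonnegative reals, and let {1,…,N} be partitioned into three disjoint sets C, U, W. Assume: (i) e_i ≥ (m_i − 2 − 1/ε)/2 for every i ∈ C; (ii) e_i ≥ m_i/3 for every i ∈ U; (iii) e_i ≥ (m_i + 1/ε)/2 for every i ∈ W; (iv) m_i ≥ 2 + 1/ε for every i ∈ C ∪ W; (v) m₁ + ⋯ + m_N = n/ε²; and (vi) |C| − 2|W| < n. Then (e₁ + ⋯ + e_N)/(m₁ + ⋯ + m_N) ≥ 1/3 − (4/3)·ε. -/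
/-!
Writing `t = 1/ε`, the hypotheses say that each message costs the adversary at least a third of its
length plus an excess: at least `-(2 + t)/3` on a confirmed correct message, `0` on an unconfirmed
one and `(1 + 2t)/3` on a confirmed wrong one (the lengths `m i ≥ 2 + t` absorb the `m i / 6`
left over from the halves). The total excess is therefore at least `-(2 + t)/3 · (|C| - 2|W|) - |W|`,
where, with `M = ∑ m i = n/ε²`, `(2 + t)/3 · (|C| - 2|W|) < (2 + t)/3 · n = (2ε² + ε)/3 · M` by
the failure of the simulation, and `|W| ≤ ε M / (1 + 2ε)` because every confirmed message is long.
Since `1/(1 + 2ε) ≤ 1 - 2ε/3` for `ε ≤ 1`, the excess is at least `-(4/3) ε M`.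
-/

open Finset

section Partition

variable {ι : Type*} [Fintype ι] [DecidableEq ι] {C U W : Finset ι}

theorem Finset.sum_univ_eq_add_add_of_partition {M : Type*} [AddCommMonoid M]
    (hCU : Disjoint C U) (hCW : Disjoint C W) (hUW : Disjoint U W)
    (hcover : C ∪ U ∪ W = univ) (f : ι → M) :
    ∑ i, f i = ∑ i ∈ C, f i + ∑ i ∈ U, f i + ∑ i ∈ W, f i := by
  rw [← hcover, sum_union (disjoint_union_left.mpr ⟨hCW, hUW⟩), sum_union hCU]

theorem card_sub_card_le_sum_sub_div_three {m e : ι → ℝ} {t : ℝ}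
    (hCU : Disjoint C U) (hCW : Disjoint C W) (hUW : Disjoint U W)
    (hcover : C ∪ U ∪ W = univ)
    (h1 : ∀ i ∈ C, (m i - 2 - t) / 2 ≤ e i)
    (h2 : ∀ i ∈ U, m i / 3 ≤ e i)
    (h3 : ∀ i ∈ W, (m i + t) / 2 ≤ e i)
    (hmC : ∀ i ∈ C, 2 + t ≤ m i) (hmW : ∀ i ∈ W, 2 + t ≤ m i) :
    (1 + 2 * t) / 3 * #W - (2 + t) / 3 * #C ≤ ∑ i, (e i - m i / 3) := by
  rw [sum_univ_eq_add_add_of_partition hCU hCW hUW hcover]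
  have hCsum : #C • (-((2 + t) / 3)) ≤ ∑ i ∈ C, (e i - m i / 3) :=
    card_nsmul_le_sum _ _ _ fun i hi => by linarith [h1 i hi, hmC i hi]
  have hUsum : 0 ≤ ∑ i ∈ U, (e i - m i / 3) :=
    sum_nonneg fun i hi => by linarith [h2 i hi]
  have hWsum : #W • ((1 + 2 * t) / 3) ≤ ∑ i ∈ W, (e i - m i / 3) :=
    card_nsmul_le_sum _ _ _ fun i hi => by linarith [h3 i hi, hmW i hi]
  simp only [nsmul_eq_mul] at hCsum hWsum
  linarith

end Partition

theorem third_sub_le_div_of_excess {ε n c w M E : ℝ} (hε0 : 0 < ε) (hε1 : ε ≤ 1)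
    (hc : 0 ≤ c) (hM : M = n / ε ^ 2) (hcw : c - 2 * w < n) (hwM : (2 + 1 / ε) * w ≤ M)
    (hE : (1 + 2 * (1 / ε)) / 3 * w - (2 + 1 / ε) / 3 * c ≤ E - M / 3) :
    1 / 3 - 4 / 3 * ε ≤ E / M := by
  have hn : n = ε ^ 2 * M := by rw [hM]; field_simp
  have hw : (2 * ε + 1) * w ≤ ε * M := by
    calc (2 * ε + 1) * w = ε * ((2 + 1 / ε) * w) := by field_simp
      _ ≤ ε * M := mul_le_mul_of_nonneg_left hwM hε0.le
  have hMpos : 0 < M := by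
    by_contra! hM0
    have hn0 : n ≤ 0 := hn ▸ mul_nonpos_of_nonneg_of_nonpos (sq_nonneg ε) hM0
    have hw0 : w ≤ 0 := by nlinarith
    linarith
  -- the excess bound in `hE` equals `-(2 + 1/ε)/3 · (c - 2w) - w`
  have hE' : M / 3 - (2 * ε ^ 2 + ε) / 3 * M - w ≤ E := by
    have hcwn : (2 + 1 / ε) * (c - 2 * w) ≤ (2 + 1 / ε) * n :=
      mul_le_mul_of_nonneg_left hcw.le (by positivity)
    have hnM : (2 + 1 / ε) * n = (2 * ε ^ 2 + ε) * M := by rw [hn]; field_simp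
    linarith
  have hw' : 3 * w ≤ ε * (3 - 2 * ε) * M := by
    refine le_of_mul_le_mul_left ?_ (by linarith : 0 < 2 * ε + 1)
    nlinarith [mul_nonneg (mul_nonneg (sq_nonneg ε) hMpos.le) (sub_nonneg.mpr hε1)]
  rw [le_div_iff₀ hMpos]
  linarith

theorem noise_rate_lower_bound_general (ε : ℝ) (hε0 : 0 < ε) (hε : ε < 1/3)
    (n N : ℕ) (m e : Fin N → ℝ)
    (hm : ∀ i, 0 ≤ m i)
    (C U W : Finset (Fin N))
    (hCU : Disjoint C U) (hCW : Disjoint C W) (hUW : Disjoint U W)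
    (hcover : C ∪ U ∪ W = Finset.univ)
    (h1 : ∀ i ∈ C, (m i - 2 - 1/ε) / 2 ≤ e i)
    (h2 : ∀ i ∈ U, m i / 3 ≤ e i)
    (h3 : ∀ i ∈ W, (m i + 1/ε) / 2 ≤ e i)
    (h4 : ∀ i ∈ C ∪ W, 2 + 1/ε ≤ m i)
    (h5 : ∑ i, m i = (n : ℝ) / ε ^ 2)
    (h6 : (C.card : ℝ) - 2 * (W.card : ℝ) < n) :
    1/3 - 4/3 * ε ≤ (∑ i, e i) / (∑ i, m i) := by
  have hexcess := card_sub_card_le_sum_sub_div_three hCU hCW hUW hcover h1 h2 h3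
    (fun i hi => h4 i (mem_union_left _ hi)) (fun i hi => h4 i (mem_union_right _ hi))
  have hW : #W • (2 + 1 / ε) ≤ ∑ i, m i :=
    (card_nsmul_le_sum W m _ fun i hi => h4 i (mem_union_right _ hi)).trans
      (sum_le_univ_sum_of_nonneg hm)
  rw [sum_sub_distrib, ← sum_div] at hexcess
  rw [nsmul_eq_mul, mul_comm] at hW
  exact third_sub_le_div_of_excess hε0 (by linarith) (Nat.cast_nonneg _) h5 h6 hW hexcess

/-- the core counting inequality in the analysis of the binary feedback
protocol tolerating noise rate 1/3 − ε. -/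
theorem noise_rate_lower_bound (ε : ℝ) (hε0 : 0 < ε) (hε : ε < 1/3)
    (n N : ℕ) (hN : 1 ≤ N) (m e : Fin N → ℝ)
    (hm : ∀ i, 0 ≤ m i) (he : ∀ i, 0 ≤ e i)
    (C U W : Finset (Fin N))
    (hCU : Disjoint C U) (hCW : Disjoint C W) (hUW : Disjoint U W)
    (hcover : C ∪ U ∪ W = Finset.univ)
    (h1 : ∀ i ∈ C, (m i - 2 - 1/ε) / 2 ≤ e i)
    (h2 : ∀ i ∈ U, m i / 3 ≤ e i)
    (h3 : ∀ i ∈ W, (m i + 1/ε) / 2 ≤ e i)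
    (h4 : ∀ i ∈ C ∪ W, 2 + 1/ε ≤ m i)
    (h5 : ∑ i, m i = (n : ℝ) / ε ^ 2)
    (h6 : (C.card : ℝ) - 2 * (W.card : ℝ) < n) :
    1/3 - 4/3 * ε ≤ (∑ i, e i) / (∑ i, m i) :=
  noise_rate_lower_bound_general ε hε0 hε n N m e hm C U W hCU hCW hUW hcover h1 h2 h3 h4 h5 h6
end
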